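/- arXiv:2509.26170 — 10 statements merged into one kernel-verified Lean document; each statement's English description precedes it below -/
import Mathlib

section
/- If a graph Γ admits a non-diagonal TF-automorphism, then Γ is unstable, i.e., the direct product Γ × K₂ admits an automorphism not contained in Aut(Γ) × Aut(K₂). -/
/-- The automorphism group of a graph given by an adjacency relation `A`. -/
def autSubgroup {X : Type*} (A : X → X → Prop) : Subgroup (Equiv.Perm X) where
  carrier := {σ | ∀ x y, A x y ↔ A (σ x) (σ y)}
  one_mem' := fun _ _ => Iff.rfl
  mul_mem' := by
    intro a b ha hb x y
    simpa [Equiv.Perm.mul_apply] using (hb x y).trans (ha (b x) (b y))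
  inv_mem' := by
    intro a ha x y
    have h := ha (a⁻¹ x) (a⁻¹ y)
    simpa using h.symm

/-- The group of two-fold automorphisms (TF-automorphisms) of a graph with
adjacency relation `A`: pairs `(α, β)` of permutations such that
`(s, t)` is an arc iff `(α s, β t)` is an arc. -/
def tfaSubgroup {X : Type*} (A : X → X → Prop) :
    Subgroup (Equiv.Perm X × Equiv.Perm X) where
  carrier := {p | ∀ x y, A x y ↔ A (p.1 x) (p.2 y)}
  one_mem' := fun _ _ => Iff.rfl
  mul_mem' := by
    intro a b ha hb x y
    simpa [Equiv.Perm.mul_apply] using (hb x y).trans (ha (b.1 x) (b.2 y))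
  inv_mem' := by
    intro a ha x y
    have h := ha (a.1⁻¹ x) (a.2⁻¹ y)
    simpa using h.symm

/-- Adjacency of the direct (tensor) product of two graphs. -/
def prodAdj {X Y : Type*} (A : X → X → Prop) (B : Y → Y → Prop) :
    X × Y → X × Y → Prop := fun p q => A p.1 q.1 ∧ B p.2 q.2

/-- Adjacency of the complete graph `K₂` on `Bool`. -/
def k2Adj : Bool → Bool → Prop := fun i j => i ≠ j

/-- Adjacency of the cycle `Cₙ` on `ZMod n`. -/
def cycAdj (n : ℕ) : ZMod n → ZMod n → Prop := fun i j => i = j + 1 ∨ j = i + 1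

/-!
The TF-automorphism `(α, β)` yields the automorphism `(v, i) ↦ (α v, i)` for `i = false`,
`(v, i) ↦ (β v, i)` for `i = true` of `Γ × K₂`: edges from the `false` layer to the `true` layer
are preserved because `(α, β)` is a TF-automorphism, and edges in the other direction because,
`Γ` being symmetric, so is `(β, α)`. An automorphism of product form `(σ, ρ)` acts on every layer
by the same `σ`, which would force `α = σ = β`.
-/

lemma tfaSubgroup_swap_mem {X : Type*} {A : X → X → Prop} (hA : Symmetric A)
    {α β : Equiv.Perm X} (h : (α, β) ∈ tfaSubgroup A) : (β, α) ∈ tfaSubgroup A :=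
  fun x y => ⟨fun hxy => hA ((h y x).mp (hA hxy)), fun hxy => hA ((h y x).mpr (hA hxy))⟩

lemma prodCongrLeft_mem_autSubgroup_prodAdj_k2Adj {X : Type*} {A : X → X → Prop}
    (e : Bool → Equiv.Perm X) (he : ∀ i j, i ≠ j → (e i, e j) ∈ tfaSubgroup A) :
    (Equiv.prodCongrLeft e : Equiv.Perm (X × Bool)) ∈ autSubgroup (prodAdj A k2Adj) := by
  rintro ⟨x, i⟩ ⟨y, j⟩
  simp only [Equiv.prodCongrLeft_apply, prodAdj, k2Adj]
  exact and_congr_left fun hij => he i j hij x y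

lemma eq_of_prodCongrLeft_eq_prodMap {X Y : Type*} {e : Y → Equiv.Perm X}
    {σ : Equiv.Perm X} {ρ : Equiv.Perm Y}
    (h : ∀ p : X × Y, Equiv.prodCongrLeft e p = (σ p.1, ρ p.2)) (i : Y) : e i = σ :=
  Equiv.ext fun x => congrArg Prod.fst (h (x, i))

theorem stmt_2_general {V : Type*} (Adj : V → V → Prop) (hsymm : Symmetric Adj)
    (α β : Equiv.Perm V) (hTF : (α, β) ∈ tfaSubgroup Adj) (hne : α ≠ β) :
    ∃ τ ∈ autSubgroup (prodAdj Adj k2Adj),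
      ¬∃ (σ : Equiv.Perm V) (ρ : Equiv.Perm Bool),
        σ ∈ autSubgroup Adj ∧ ρ ∈ autSubgroup k2Adj ∧
        ∀ x : V × Bool, τ x = (σ x.1, ρ x.2) := by
  let e : Bool → Equiv.Perm V := fun i => bif i then β else α
  refine ⟨Equiv.prodCongrLeft e, prodCongrLeft_mem_autSubgroup_prodAdj_k2Adj e ?_, ?_⟩
  · rintro (_ | _) (_ | _) hij
    exacts [absurd rfl hij, hTF, tfaSubgroup_swap_mem hsymm hTF, absurd rfl hij]
  · rintro ⟨σ, ρ, -, -, hτ⟩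
    exact hne ((eq_of_prodCongrLeft_eq_prodMap hτ false).trans
      (eq_of_prodCongrLeft_eq_prodMap hτ true).symm)

/-- If a graph `Γ` admits a non-diagonal TF-automorphism, then `Γ` is
unstable: `Γ × K₂` admits an automorphism not contained in `Aut(Γ) × Aut(K₂)`. -/
theorem stmt_2 {V : Type*} [Fintype V] (Adj : V → V → Prop) (hsymm : Symmetric Adj)
    (α β : Equiv.Perm V) (hTF : (α, β) ∈ tfaSubgroup Adj) (hne : α ≠ β) :
    ∃ τ ∈ autSubgroup (prodAdj Adj k2Adj),
      ¬∃ (σ : Equiv.Perm V) (ρ : Equiv.Perm Bool),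
        σ ∈ autSubgroup Adj ∧ ρ ∈ autSubgroup k2Adj ∧
        ∀ x : V × Bool, τ x = (σ x.1, ρ x.2) :=
  stmt_2_general Adj hsymm α β hTF hne
end

section
/- Let Γ be a connected non-bipartite graph. Then Aut(Γ × K₂) is isomorphic to TFA(Γ) ⋊ Z₂; in particular Γ is unstable if and only if Γ admits a non-diagonal TF-automorphism. -/
/-!
An automorphism `τ` of `Γ × K₂` either preserves both layers `V × {false}`, `V × {true}` or swaps
them. Indeed, write `c v`, `d v` for the layers of `τ (v, false)`, `τ (v, true)`. An edge `u ~ v`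
forces `c u ≠ d v` and `d u ≠ c v`, so by connectedness `c xor d` is constant; it is not `false`,
for then `c` would be a proper 2-colouring of `Γ`. Hence `d = !c`, and then `c` is constant.

The layer-preserving automorphisms are exactly the maps acting by `α` on `V × {false}` and by `β`
on `V × {true}` with `(α, β) ∈ TFA(Γ)`, and the layer swap is an involutive automorphism
conjugating `(α, β)` to `(β, α)`; whence `Aut(Γ × K₂) ≅ TFA(Γ) ⋊ ℤ/2`. Such an automorphism is a
product `σ × ρ` exactly when `α = β`.
-/

def zmodTwoHom {G : Type*} [Group G] (s : G) (hs : s * s = 1) : Multiplicative (ZMod 2) →* G :=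
  AddMonoidHom.toMultiplicativeLeft <|
    ZMod.lift 2 ⟨zmultiplesHom (Additive G) (Additive.ofMul s), by
      simpa [two_zsmul] using congrArg Additive.ofMul hs⟩

@[simp] lemma zmodTwoHom_ofAdd_one {G : Type*} [Group G] (s : G) (hs : s * s = 1) :
    zmodTwoHom s hs (Multiplicative.ofAdd 1) = s := by
  change Additive.toMul (ZMod.lift 2 _ ((1 : ℤ) : ZMod 2)) = s
  rw [ZMod.lift_coe]
  simp

lemma Multiplicative.zmod_two_eq_one_or_eq_ofAdd_one (k : Multiplicative (ZMod 2)) :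
    k = 1 ∨ k = Multiplicative.ofAdd 1 := by
  revert k; decide

namespace TFAut

open Equiv

variable {V : Type*}

def layerwise : Perm V × Perm V →* Perm (V × Bool) where
  toFun p :=
    { toFun x := (bif x.2 then p.2 x.1 else p.1 x.1, x.2)
      invFun x := (bif x.2 then p.2⁻¹ x.1 else p.1⁻¹ x.1, x.2)
      left_inv := fun ⟨v, b⟩ => by cases b <;> simp
      right_inv := fun ⟨v, b⟩ => by cases b <;> simp }
  map_one' := Equiv.ext fun ⟨v, b⟩ => by cases b <;> rfl
  map_mul' _ _ := Equiv.ext fun ⟨v, b⟩ => by cases b <;> rfl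

@[simp] lemma layerwise_apply_false (p : Perm V × Perm V) (v : V) :
    layerwise p (v, false) = (p.1 v, false) := rfl

@[simp] lemma layerwise_apply_true (p : Perm V × Perm V) (v : V) :
    layerwise p (v, true) = (p.2 v, true) := rfl

lemma layerwise_self_apply (σ : Perm V) (x : V × Bool) : layerwise (σ, σ) x = (σ x.1, x.2) := by
  cases x with | mk v b => cases b <;> rfl

lemma layerwise_injective : Function.Injective (layerwise (V := V)) := by
  intro p q h
  ext v
  · exact congrArg Prod.fst (DFunLike.congr_fun h (v, false))
  · exact congrArg Prod.fst (DFunLike.congr_fun h (v, true))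

lemma exists_layerwise_eq {τ : Perm (V × Bool)} (hτ : ∀ x, (τ x).2 = x.2) :
    ∃ p, layerwise p = τ := by
  have hτ' : ∀ x, (τ.symm x).2 = x.2 := fun x => by simpa using (hτ (τ.symm x)).symm
  have fix : ∀ (σ : Perm (V × Bool)), (∀ x, (σ x).2 = x.2) → ∀ v b, ((σ (v, b)).1, b) = σ (v, b) :=
    fun σ hσ v b => Prod.ext rfl (hσ (v, b)).symm
  let restrict (b : Bool) : Perm V :=
    { toFun v := (τ (v, b)).1
      invFun v := (τ.symm (v, b)).1
      left_inv v := by simp [fix τ hτ]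
      right_inv v := by simp [fix τ.symm hτ'] }
  refine ⟨(restrict false, restrict true), Equiv.ext fun ⟨v, b⟩ => ?_⟩
  cases b <;> exact fix τ hτ _ _

def swapLayers : Perm (V × Bool) := (Equiv.refl V).prodCongr Equiv.boolNot

@[simp] lemma swapLayers_apply (x : V × Bool) : swapLayers x = (x.1, !x.2) := rfl

lemma swapLayers_mul_self : swapLayers * swapLayers = (1 : Perm (V × Bool)) :=
  Equiv.ext fun x => by simp [Perm.mul_apply]

lemma swapLayers_mul_layerwise_mul_swapLayers_inv (p : Perm V × Perm V) :
    swapLayers * layerwise p * swapLayers⁻¹ = layerwise p.swap :=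
  Equiv.ext fun ⟨v, b⟩ => by cases b <;> rfl

lemma layerwise_mul_swapLayers_ne_one [Nonempty V] (p : Perm V × Perm V) :
    layerwise p * swapLayers ≠ 1 := fun h => by
  obtain ⟨v⟩ := ‹Nonempty V›
  simpa using congrArg Prod.snd (DFunLike.congr_fun h (v, false))

variable {Adj : V → V → Prop}

lemma swapLayers_mem_autSubgroup : swapLayers ∈ autSubgroup (prodAdj Adj k2Adj) := fun x y => by
  simp [prodAdj, k2Adj]

lemma eq_of_forall_adj_eq (hconn : ∀ u v : V, Relation.ReflTransGen Adj u v) {β : Type*}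
    {f : V → β} (hf : ∀ u v, Adj u v → f u = f v) (u v : V) : f u = f v := by
  simpa [Relation.reflTransGen_eq_self] using (hconn u v).lift f hf

lemma snd_apply_ne_of_adj {τ : Perm (V × Bool)} (hτ : τ ∈ autSubgroup (prodAdj Adj k2Adj))
    {u v : V} (h : Adj u v) (b : Bool) : (τ (u, b)).2 ≠ (τ (v, !b)).2 :=
  ((hτ (u, b) (v, !b)).1 ⟨h, by simp [k2Adj]⟩).2

lemma snd_apply_true_eq_not (hconn : ∀ u v : V, Relation.ReflTransGen Adj u v)
    (hnonbip : ¬∃ c : V → Bool, ∀ u v, Adj u v → c u ≠ c v) {τ : Perm (V × Bool)}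
    (hτ : τ ∈ autSubgroup (prodAdj Adj k2Adj)) (v : V) :
    (τ (v, true)).2 = !(τ (v, false)).2 := by
  set c : V → Bool := fun v => (τ (v, false)).2
  set d : V → Bool := fun v => (τ (v, true)).2
  have hxor := eq_of_forall_adj_eq hconn (f := fun v => xor (c v) (d v)) fun u v h => by
    simp only [c, d]
    rw [Bool.eq_not_of_ne (snd_apply_ne_of_adj hτ h false),
      Bool.eq_not_of_ne (snd_apply_ne_of_adj hτ h true), Bool.not_xor_not, Bool.xor_comm]
    rfl
  by_contra! hv
  change d v ≠ !c v at hv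
  have hdc : ∀ u, d u = c u := fun u => by
    have := hxor u v
    revert this hv
    cases c u <;> cases d u <;> cases c v <;> cases d v <;> decide
  exact hnonbip ⟨c, fun u v h => hdc v ▸ snd_apply_ne_of_adj hτ h false⟩

lemma preserves_layers_or_swaps_layers (hconn : ∀ u v : V, Relation.ReflTransGen Adj u v)
    (hnonbip : ¬∃ c : V → Bool, ∀ u v, Adj u v → c u ≠ c v) {τ : Perm (V × Bool)}
    (hτ : τ ∈ autSubgroup (prodAdj Adj k2Adj)) :
    (∀ x, (τ x).2 = x.2) ∨ ∀ x, (τ x).2 = !x.2 := by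
  set c : V → Bool := fun v => (τ (v, false)).2
  have hd := snd_apply_true_eq_not hconn hnonbip hτ
  have hc := eq_of_forall_adj_eq hconn (f := c) fun u v h => by
    simpa [hd] using snd_apply_ne_of_adj hτ h false
  have hτx : ∀ x, (τ x).2 = xor x.2 (c x.1) := by
    rintro ⟨v, _ | _⟩
    · simp [c]
    · simpa using hd v
  by_cases h : ∃ v, c v = true
  · obtain ⟨v₀, hv₀⟩ := h
    exact Or.inr fun x => by rw [hτx, hc x.1 v₀, hv₀, Bool.xor_true]
  · have h' : ∀ v, c v = false := by simpa using h
    exact Or.inl fun x => by rw [hτx, h', Bool.xor_false]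

lemma nonempty_of_not_bipartite (hnonbip : ¬∃ c : V → Bool, ∀ u v, Adj u v → c u ≠ c v) :
    Nonempty V := by
  by_contra h
  exact hnonbip ⟨fun _ => false, fun u => (not_nonempty_iff.1 h).elim u⟩

variable [Std.Symm Adj]

lemma swap_mem_tfaSubgroup {p : Perm V × Perm V} (hp : p ∈ tfaSubgroup Adj) :
    p.swap ∈ tfaSubgroup Adj := fun x y =>
  (Std.Symm.iff x y).trans ((hp y x).trans (Std.Symm.iff _ _))

lemma layerwise_mem_autSubgroup_iff {p : Perm V × Perm V} :
    layerwise p ∈ autSubgroup (prodAdj Adj k2Adj) ↔ p ∈ tfaSubgroup Adj := by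
  refine ⟨fun h x y => by simpa [prodAdj, k2Adj] using h (x, false) (y, true), fun hp => ?_⟩
  have hp' := swap_mem_tfaSubgroup hp
  rintro ⟨x, _ | _⟩ ⟨y, _ | _⟩
  all_goals simp only [prodAdj, k2Adj, layerwise_apply_false, layerwise_apply_true]
  · simp
  · simpa using hp x y
  · simpa using hp' x y
  · simp

lemma exists_tfa_of_mem_autSubgroup
    (hconn : ∀ u v : V, Relation.ReflTransGen Adj u v)
    (hnonbip : ¬∃ c : V → Bool, ∀ u v, Adj u v → c u ≠ c v) {τ : Perm (V × Bool)}
    (hτ : τ ∈ autSubgroup (prodAdj Adj k2Adj)) :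
    ∃ p ∈ tfaSubgroup Adj, τ = layerwise p ∨ τ = layerwise p * swapLayers := by
  rcases preserves_layers_or_swaps_layers hconn hnonbip hτ with hpres | hswap
  · obtain ⟨p, rfl⟩ := exists_layerwise_eq hpres
    exact ⟨p, layerwise_mem_autSubgroup_iff.1 hτ, Or.inl rfl⟩
  · obtain ⟨p, hp⟩ := exists_layerwise_eq (τ := τ * swapLayers) fun x => by simp [hswap]
    refine ⟨p, layerwise_mem_autSubgroup_iff.1 ?_, Or.inr ?_⟩
    · exact hp ▸ mul_mem hτ swapLayers_mem_autSubgroup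
    · rw [hp, mul_assoc, swapLayers_mul_self, mul_one]

@[simps]
def tfaSwap : MulAut (tfaSubgroup Adj) where
  toFun p := ⟨p.1.swap, swap_mem_tfaSubgroup p.2⟩
  invFun p := ⟨p.1.swap, swap_mem_tfaSubgroup p.2⟩
  left_inv _ := rfl
  right_inv _ := rfl
  map_mul' _ _ := rfl

lemma tfaSwap_mul_self : tfaSwap (Adj := Adj) * tfaSwap = 1 :=
  MulEquiv.ext fun _ => rfl

def tfaAction : Multiplicative (ZMod 2) →* MulAut (tfaSubgroup Adj) :=
  zmodTwoHom tfaSwap tfaSwap_mul_self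

def layerwiseHom : tfaSubgroup Adj →* autSubgroup (prodAdj Adj k2Adj) :=
  (layerwise.comp (tfaSubgroup Adj).subtype).codRestrict _ fun p =>
    layerwise_mem_autSubgroup_iff.2 p.2

def swapLayersHom : Multiplicative (ZMod 2) →* autSubgroup (prodAdj Adj k2Adj) :=
  zmodTwoHom ⟨swapLayers, swapLayers_mem_autSubgroup⟩ (Subtype.ext swapLayers_mul_self)

lemma layerwiseHom_comp_tfaAction (k : Multiplicative (ZMod 2)) :
    (layerwiseHom (Adj := Adj)).comp (tfaAction k).toMonoidHom =
      (MulAut.conj (swapLayersHom k)).toMonoidHom.comp layerwiseHom := by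
  ext p : 1
  apply Subtype.ext
  rcases Multiplicative.zmod_two_eq_one_or_eq_ofAdd_one k with rfl | rfl
  · simp
  · simp [tfaAction, swapLayersHom, layerwiseHom, swapLayers_mul_layerwise_mul_swapLayers_inv]

def toAutProd :
    tfaSubgroup Adj ⋊[tfaAction] Multiplicative (ZMod 2) →*
      autSubgroup (prodAdj Adj k2Adj) :=
  SemidirectProduct.lift layerwiseHom swapLayersHom layerwiseHom_comp_tfaAction

lemma toAutProd_bijective
    (hconn : ∀ u v : V, Relation.ReflTransGen Adj u v)
    (hnonbip : ¬∃ c : V → Bool, ∀ u v, Adj u v → c u ≠ c v) :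
    Function.Bijective (toAutProd (Adj := Adj)) := by
  have := nonempty_of_not_bipartite hnonbip
  refine ⟨(injective_iff_map_eq_one _).2 fun ⟨p, k⟩ h => ?_, fun ⟨τ, hτ⟩ => ?_⟩
  · have h' : layerwise p.1 * (swapLayersHom k).1 = 1 := congrArg Subtype.val h
    rcases Multiplicative.zmod_two_eq_one_or_eq_ofAdd_one k with rfl | rfl
    · rw [map_one, OneMemClass.coe_one, mul_one, ← map_one layerwise] at h'
      exact SemidirectProduct.ext (Subtype.ext (layerwise_injective h')) rfl
    · exact absurd h' (layerwise_mul_swapLayers_ne_one _)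
  · obtain ⟨p, hp, rfl | rfl⟩ := exists_tfa_of_mem_autSubgroup hconn hnonbip hτ
    · exact ⟨⟨⟨p, hp⟩, 1⟩, Subtype.ext (mul_one _)⟩
    · exact ⟨⟨⟨p, hp⟩, Multiplicative.ofAdd 1⟩, by simp [toAutProd, swapLayersHom, layerwiseHom]⟩

lemma exists_prod_of_mem_autSubgroup
    (hconn : ∀ u v : V, Relation.ReflTransGen Adj u v)
    (hnonbip : ¬∃ c : V → Bool, ∀ u v, Adj u v → c u ≠ c v)
    (hdiag : ∀ p ∈ tfaSubgroup Adj, p.1 = p.2) {τ : Perm (V × Bool)}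
    (hτ : τ ∈ autSubgroup (prodAdj Adj k2Adj)) :
    ∃ (σ : Perm V) (ρ : Perm Bool), σ ∈ autSubgroup Adj ∧ ρ ∈ autSubgroup k2Adj ∧
      ∀ x : V × Bool, τ x = (σ x.1, ρ x.2) := by
  obtain ⟨⟨σ, σ'⟩, hp, rfl | rfl⟩ := exists_tfa_of_mem_autSubgroup hconn hnonbip hτ
  all_goals obtain rfl : σ = σ' := hdiag _ hp
  · exact ⟨σ, 1, hp, one_mem _, layerwise_self_apply σ⟩
  · refine ⟨σ, Equiv.boolNot, hp, fun i j => by simp [k2Adj], fun x => ?_⟩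
    simp [Perm.mul_apply, layerwise_self_apply]

lemma fst_eq_snd_of_layerwise_eq {p : Perm V × Perm V} {σ : Perm V} {ρ : Perm Bool}
    (h : ∀ x : V × Bool, layerwise p x = (σ x.1, ρ x.2)) : p.1 = p.2 :=
  Equiv.ext fun v =>
    (congrArg Prod.fst (h (v, false))).trans (congrArg Prod.fst (h (v, true))).symm

end TFAut

theorem stmt_3_general {V : Type*} (Adj : V → V → Prop) (hsymm : Symmetric Adj)
    (hconn : ∀ u v : V, Relation.ReflTransGen Adj u v)
    (hnonbip : ¬∃ c : V → Bool, ∀ u v, Adj u v → c u ≠ c v) :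
    (∃ φ : Multiplicative (ZMod 2) →* MulAut ↥(tfaSubgroup Adj),
        Nonempty (↥(autSubgroup (prodAdj Adj k2Adj)) ≃*
          (↥(tfaSubgroup Adj) ⋊[φ] Multiplicative (ZMod 2)))) ∧
    ((∃ τ ∈ autSubgroup (prodAdj Adj k2Adj),
        ¬∃ (σ : Equiv.Perm V) (ρ : Equiv.Perm Bool),
          σ ∈ autSubgroup Adj ∧ ρ ∈ autSubgroup k2Adj ∧
          ∀ x : V × Bool, τ x = (σ x.1, ρ x.2)) ↔
      ∃ p ∈ tfaSubgroup Adj, p.1 ≠ p.2) := by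
  have : Std.Symm Adj := ⟨fun _ _ h => hsymm h⟩
  refine ⟨⟨TFAut.tfaAction,
    ⟨(MulEquiv.ofBijective _ (TFAut.toAutProd_bijective hconn hnonbip)).symm⟩⟩, ?_, ?_⟩
  · rintro ⟨τ, hτ, hnot⟩
    by_contra! hdiag
    exact hnot (TFAut.exists_prod_of_mem_autSubgroup hconn hnonbip hdiag hτ)
  · rintro ⟨p, hp, hne⟩
    exact ⟨TFAut.layerwise p, TFAut.layerwise_mem_autSubgroup_iff.2 hp,
      fun ⟨_, _, _, _, h⟩ => hne (TFAut.fst_eq_snd_of_layerwise_eq h)⟩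

/-- For a connected non-bipartite graph `Γ`, we have
`Aut(Γ × K₂) ≅ TFA(Γ) ⋊ Z₂`; in particular `Γ` is unstable if and only if it
admits a non-diagonal TF-automorphism. -/
theorem stmt_3 {V : Type*} [Fintype V] (Adj : V → V → Prop) (hsymm : Symmetric Adj)
    (hconn : ∀ u v : V, Relation.ReflTransGen Adj u v)
    (hnonbip : ¬∃ c : V → Bool, ∀ u v, Adj u v → c u ≠ c v) :
    (∃ φ : Multiplicative (ZMod 2) →* MulAut ↥(tfaSubgroup Adj),
        Nonempty (↥(autSubgroup (prodAdj Adj k2Adj)) ≃*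
          (↥(tfaSubgroup Adj) ⋊[φ] Multiplicative (ZMod 2)))) ∧
    ((∃ τ ∈ autSubgroup (prodAdj Adj k2Adj),
        ¬∃ (σ : Equiv.Perm V) (ρ : Equiv.Perm Bool),
          σ ∈ autSubgroup Adj ∧ ρ ∈ autSubgroup k2Adj ∧
          ∀ x : V × Bool, τ x = (σ x.1, ρ x.2)) ↔
      ∃ p ∈ tfaSubgroup Adj, p.1 ≠ p.2) :=
  stmt_3_general Adj hsymm hconn hnonbip
end

section
/- The subgroup of Aut(Γ × K₂) consisting of automorphisms that setwise stabilize V(Γ)×{0} is isomorphic to the group TFA(Γ) of TF-automorphisms of Γ. -/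
/-
An automorphism of `Γ × K₂` fixing the layer `V × {0}` setwise also fixes `V × {1}` (by
finiteness), so it acts on the two layers by permutations `α` and `β`. Since edges of
`Γ × K₂` only join the two layers, `τ` is an automorphism iff `(α, β)` preserves the arcs from
layer `0` to layer `1`, i.e. iff `(α, β)` is a TF-automorphism; the arcs from layer `1` to
layer `0` are handled by symmetry of `Γ`.
-/

section LayerPerm

variable {V : Type*}

def layerPerm (α β : Equiv.Perm V) : Equiv.Perm (V × Bool) :=
  Equiv.prodCongrLeft fun b => cond b β α

@[simp] lemma layerPerm_apply_false (α β : Equiv.Perm V) (v : V) :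
    layerPerm α β (v, false) = (α v, false) := rfl

@[simp] lemma layerPerm_apply_true (α β : Equiv.Perm V) (v : V) :
    layerPerm α β (v, true) = (β v, true) := rfl

def layerPermHom : Equiv.Perm V × Equiv.Perm V →* Equiv.Perm (V × Bool) where
  toFun p := layerPerm p.1 p.2
  map_one' := by ext ⟨v, _ | _⟩ <;> rfl
  map_mul' _ _ := by ext ⟨v, _ | _⟩ <;> rfl

lemma layerPermHom_injective : Function.Injective (layerPermHom (V := V)) := by
  rintro ⟨α, β⟩ ⟨α', β'⟩ h
  have hα : α = α' := Equiv.ext fun v => congrArg Prod.fst (Equiv.congr_fun h (v, false))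
  have hβ : β = β' := Equiv.ext fun v => congrArg Prod.fst (Equiv.congr_fun h (v, true))
  rw [hα, hβ]

lemma layerPerm_mem_autSubgroup_iff {A : V → V → Prop} (hA : Symmetric A)
    (α β : Equiv.Perm V) :
    layerPerm α β ∈ autSubgroup (prodAdj A k2Adj) ↔ (α, β) ∈ tfaSubgroup A := by
  constructor
  · intro h x y
    simpa [prodAdj, k2Adj] using h (x, false) (y, true)
  · rintro h ⟨x, _ | _⟩ ⟨y, _ | _⟩
    · simp [prodAdj, k2Adj]
    · simpa [prodAdj, k2Adj] using h x y
    · have hswap : ∀ a b, A a b ↔ A b a := fun a b => ⟨@hA a b, @hA b a⟩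
      simpa [prodAdj, k2Adj, hswap x, hswap (β x)] using h y x
    · simp [prodAdj, k2Adj]

lemma snd_apply_eq_of_snd_apply_false [Finite V] {τ : Equiv.Perm (V × Bool)}
    (h : ∀ v, (τ (v, false)).2 = false) (v : V) (b : Bool) : (τ (v, b)).2 = b := by
  cases b with
  | false => exact h v
  | true =>
    by_contra hv
    have hinj : Function.Injective fun w => (τ (w, false)).1 := fun w w' hw => by
      simpa using τ.injective (Prod.ext hw ((h w).trans (h w').symm))
    obtain ⟨w, hw⟩ := (Finite.injective_iff_surjective.mp hinj) (τ (v, true)).1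
    have := τ.injective (Prod.ext hw ((h w).trans (Bool.eq_false_iff.mpr hv).symm))
    simp at this

def fiberPerm (τ : Equiv.Perm (V × Bool)) (h : ∀ v b, (τ (v, b)).2 = b) (b : Bool) :
    Equiv.Perm V where
  toFun v := (τ (v, b)).1
  invFun v := (τ.symm (v, b)).1
  left_inv v := by
    have : ((τ (v, b)).1, b) = τ (v, b) := Prod.ext rfl (h v b).symm
    simp [this]
  right_inv v := by
    have hb : (τ.symm (v, b)).2 = b := by
      simpa using (h (τ.symm (v, b)).1 (τ.symm (v, b)).2).symm
    have : ((τ.symm (v, b)).1, b) = τ.symm (v, b) := Prod.ext rfl hb.symm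
    simp [this]

lemma layerPerm_fiberPerm (τ : Equiv.Perm (V × Bool)) (h : ∀ v b, (τ (v, b)).2 = b) :
    layerPerm (fiberPerm τ h false) (fiberPerm τ h true) = τ := by
  ext1 ⟨v, b⟩
  cases b <;> exact Prod.ext rfl (h v _).symm

end LayerPerm

/-- The subgroup of `Aut(Γ × K₂)` consisting of automorphisms that
setwise stabilize `V(Γ) × {0}` is isomorphic to `TFA(Γ)`, via the isomorphism
sending `τ` to `(α, β)` where `τ (v,0) = (α v, 0)` and `τ (v,1) = (β v, 1)`. -/
theorem stmt_4 {V : Type*} [Fintype V] (Adj : V → V → Prop) (hsymm : Symmetric Adj) :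
    ∃ H : Subgroup (Equiv.Perm (V × Bool)),
      (H : Set (Equiv.Perm (V × Bool))) =
        {τ | τ ∈ autSubgroup (prodAdj Adj k2Adj) ∧ ∀ v : V, (τ (v, false)).2 = false} ∧
      ∃ f : H ≃* ↥(tfaSubgroup Adj),
        ∀ (τ : H) (v : V),
          (τ : Equiv.Perm (V × Bool)) (v, false) =
            ((f τ : Equiv.Perm V × Equiv.Perm V).1 v, false) ∧
          (τ : Equiv.Perm (V × Bool)) (v, true) =
            ((f τ : Equiv.Perm V × Equiv.Perm V).2 v, true) := by
  refine ⟨(tfaSubgroup Adj).map layerPermHom, ?_, ?_⟩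
  · ext τ
    constructor
    · rintro ⟨⟨α, β⟩, hαβ, rfl⟩
      exact ⟨(layerPerm_mem_autSubgroup_iff hsymm α β).2 hαβ, fun v => rfl⟩
    · rintro ⟨haut, hfalse⟩
      have hlayers := snd_apply_eq_of_snd_apply_false hfalse
      rw [← layerPerm_fiberPerm τ hlayers] at haut ⊢
      exact ⟨_, (layerPerm_mem_autSubgroup_iff hsymm _ _).1 haut, rfl⟩
  · let e := (tfaSubgroup Adj).equivMapOfInjective layerPermHom layerPermHom_injective
    refine ⟨e.symm, fun τ v => ?_⟩
    obtain ⟨p, rfl⟩ := e.surjective τ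
    rw [e.symm_apply_apply]
    exact ⟨rfl, rfl⟩
end

section
/- Let Γ be a connected bipartite graph with bipartition {U,W} that admits an automorphism swapping U and W. Then |Aut(Γ × K₂)| = 4·|TFA(Γ)|. -/
/-!
`Aut(Γ × K₂)` acts on the proper 2-colourings `c : V × Bool → Bool` of `Γ × K₂` by
`g • c = c ∘ g⁻¹`. The stabiliser of the layer colouring `(v, i) ↦ i` consists of the
layer-preserving automorphisms, and these are exactly the maps `(v, false) ↦ (α v, false)`,
`(v, true) ↦ (β v, true)` with `(α, β)` a TF-automorphism of `Γ`.

Since `Γ` is connected and bipartite, `Γ × K₂` has exactly two components, and `(v₀, false)`,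
`(v₀, true)` lie in different ones; so a proper 2-colouring is determined by its values at these
two points. The layer swap and the automorphism acting as `(v, i) ↦ (σ v, !i)` on one component
only (`σ` swapping the two sides of `Γ`) realise all four pairs of values, so the orbit has four
elements and orbit–stabiliser gives `|Aut(Γ × K₂)| = 4 |TFA(Γ)|`.
-/

open Equiv MulAction

attribute [local instance] arrowAction

section Coloring

variable {X : Type*} {A : X → X → Prop}

def IsTwoColoring (A : X → X → Prop) (c : X → Bool) : Prop :=
  ∀ ⦃p q⦄, A p q → c p ≠ c q

theorem IsTwoColoring.eq_iff_eq_of_reflTransGen {c d : X → Bool} (hc : IsTwoColoring A c)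
    (hd : IsTwoColoring A d) {p q : X} (h : Relation.ReflTransGen A p q) :
    c p = d p ↔ c q = d q := by
  induction h with
  | refl => rfl
  | tail _ hqr ih =>
    rw [ih, Bool.eq_not_of_ne (hc hqr).symm, Bool.eq_not_of_ne (hd hqr).symm, Bool.not_inj_iff]

theorem IsTwoColoring.of_mem_orbit {c d : X → Bool} (hc : IsTwoColoring A c)
    (hd : d ∈ orbit (autSubgroup A) c) : IsTwoColoring A d := by
  obtain ⟨g, rfl⟩ := hd
  exact fun p q hpq => hc (((g⁻¹).2 p q).mp hpq)

end Coloring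

section Product

variable {X Y : Type*} {A : X → X → Prop} {B : Y → Y → Prop}

theorem prodCongr_mem_autSubgroup_prodAdj {σ : Perm X} {τ : Perm Y} (hσ : σ ∈ autSubgroup A)
    (hτ : τ ∈ autSubgroup B) : prodCongr σ τ ∈ autSubgroup (prodAdj A B) :=
  fun p q => and_congr (hσ p.1 q.1) (hτ p.2 q.2)

theorem IsTwoColoring.comp_fst {κ : X → Bool} (hκ : IsTwoColoring A κ) :
    IsTwoColoring (prodAdj A B) (κ ∘ Prod.fst) :=
  fun _ _ h => hκ h.1

theorem isTwoColoring_snd : IsTwoColoring (prodAdj A k2Adj) Prod.snd :=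
  fun _ _ h => h.2

theorem boolNot_mem_autSubgroup_k2Adj : boolNot ∈ autSubgroup k2Adj := by
  intro i j
  simp [k2Adj]

end Product

section DirectProductWithK2

variable {V : Type*} {Adj : V → V → Prop}

theorem exists_reflTransGen_prodAdj_k2Adj {u v : V} (h : Relation.ReflTransGen Adj u v)
    (i : Bool) : ∃ j, Relation.ReflTransGen (prodAdj Adj k2Adj) (u, i) (v, j) := by
  induction h with
  | refl => exact ⟨i, .refl⟩
  | tail _ hvw ih =>
    obtain ⟨j, hj⟩ := ih
    exact ⟨!j, hj.tail ⟨hvw, by simp [k2Adj]⟩⟩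

theorem reflTransGen_prodAdj_k2Adj_iff (hconn : ∀ u v : V, Relation.ReflTransGen Adj u v)
    {κ : V → Bool} (hκ : IsTwoColoring Adj κ) {p q : V × Bool} :
    Relation.ReflTransGen (prodAdj Adj k2Adj) p q ↔ (κ p.1 = p.2 ↔ κ q.1 = q.2) := by
  refine ⟨(hκ.comp_fst.eq_iff_eq_of_reflTransGen isTwoColoring_snd ·), fun h => ?_⟩
  obtain ⟨j, hj⟩ := exists_reflTransGen_prodAdj_k2Adj (hconn p.1 q.1) p.2
  have hj' := h.symm.trans (hκ.comp_fst.eq_iff_eq_of_reflTransGen isTwoColoring_snd hj)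
  obtain rfl : j = q.2 := by
    cases j <;> cases hq : q.2 <;> cases κ q.1 <;> simp_all
  exact hj

theorem reflTransGen_prodAdj_k2Adj_false_or_true
    (hconn : ∀ u v : V, Relation.ReflTransGen Adj u v) {κ : V → Bool}
    (hκ : IsTwoColoring Adj κ) (v₀ : V) (p : V × Bool) :
    Relation.ReflTransGen (prodAdj Adj k2Adj) (v₀, false) p ∨
      Relation.ReflTransGen (prodAdj Adj k2Adj) (v₀, true) p := by
  simp only [reflTransGen_prodAdj_k2Adj_iff hconn hκ]
  cases κ v₀ <;> simp [em, or_comm]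

theorem IsTwoColoring.eq_of_prodAdj_k2Adj (hconn : ∀ u v : V, Relation.ReflTransGen Adj u v)
    {κ : V → Bool} (hκ : IsTwoColoring Adj κ) {c d : V × Bool → Bool}
    (hc : IsTwoColoring (prodAdj Adj k2Adj) c) (hd : IsTwoColoring (prodAdj Adj k2Adj) d)
    {v₀ : V} (hfalse : c (v₀, false) = d (v₀, false)) (htrue : c (v₀, true) = d (v₀, true)) :
    c = d := by
  funext p
  rcases reflTransGen_prodAdj_k2Adj_false_or_true hconn hκ v₀ p with h | h
  · exact (hc.eq_iff_eq_of_reflTransGen hd h).mp hfalse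
  · exact (hc.eq_iff_eq_of_reflTransGen hd h).mp htrue

end DirectProductWithK2

section Automorphisms

variable {X : Type*} {A : X → X → Prop}

theorem ofSubtype_subtypePerm_mem_autSubgroup {P : X → Prop} [DecidablePred P]
    (hP : ∀ ⦃p q⦄, A p q → (P p ↔ P q)) {f : Perm X} (hf : f ∈ autSubgroup A)
    (hfP : ∀ x, P (f x) ↔ P x) : Perm.ofSubtype (f.subtypePerm hfP) ∈ autSubgroup A := by
  intro p q
  by_cases hp : P p <;> by_cases hq : P q <;>
    simp only [Perm.ofSubtype_subtypePerm_of_mem, Perm.ofSubtype_subtypePerm_of_not_mem, hp, hq,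
      hf p q, not_false_eq_true]
  · exact iff_of_false (fun h => hq ((hfP q).mp ((hP h).mp ((hfP p).mpr hp))))
      (fun h => hq ((hP h).mp ((hfP p).mpr hp)))
  · exact iff_of_false (fun h => hp ((hfP p).mp ((hP h).mpr ((hfP q).mpr hq))))
      (fun h => hp ((hP h).mpr ((hfP q).mpr hq)))

end Automorphisms

namespace Equiv.Perm

variable {X Y : Type*}

theorem inv_apply_snd {g : Perm (X × Y)} (hg : ∀ p, (g p).2 = p.2) (p : X × Y) :
    (g⁻¹ p).2 = p.2 := by
  simpa using (hg (g⁻¹ p)).symm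

def fiberPerm (g : Perm (X × Y)) (hg : ∀ p, (g p).2 = p.2) (y : Y) : Perm X where
  toFun x := (g (x, y)).1
  invFun x := (g⁻¹ (x, y)).1
  left_inv x := by
    change (g⁻¹ ((g (x, y)).1, y)).1 = x
    rw [show ((g (x, y)).1, y) = g (x, y) from Prod.ext rfl (hg (x, y)).symm]
    simp
  right_inv x := by
    change (g ((g⁻¹ (x, y)).1, y)).1 = x
    rw [show ((g⁻¹ (x, y)).1, y) = g⁻¹ (x, y) from Prod.ext rfl (inv_apply_snd hg (x, y)).symm]
    simp

theorem apply_eq_fiberPerm {g : Perm (X × Y)} (hg : ∀ p, (g p).2 = p.2) (x : X) (y : Y) :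
    g (x, y) = (fiberPerm g hg y x, y) :=
  Prod.ext rfl (hg _)

def fiberwise (t : Perm X × Perm X) : Perm (X × Bool) :=
  prodCongrLeft fun i => cond i t.2 t.1

theorem mem_stabilizer_snd_iff {H : Subgroup (Perm (X × Y))} {g : H} :
    g ∈ stabilizer H (Prod.snd : X × Y → Y) ↔ ∀ p, ((g : Perm (X × Y)) p).2 = p.2 := by
  rw [mem_stabilizer_iff, funext_iff]
  change (∀ p, ((g : Perm (X × Y))⁻¹ p).2 = p.2) ↔ _
  exact ⟨fun h p => by simpa using (h ((g : Perm (X × Y)) p)).symm, inv_apply_snd⟩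

end Equiv.Perm

section TFA

open Equiv.Perm

variable {V : Type*} {Adj : V → V → Prop}

theorem fiberwise_mem_autSubgroup [Std.Symm Adj] {t : Perm V × Perm V}
    (ht : t ∈ tfaSubgroup Adj) : fiberwise t ∈ autSubgroup (prodAdj Adj k2Adj) := by
  rintro ⟨x, i⟩ ⟨y, j⟩
  cases i <;> cases j <;> simp [fiberwise, prodAdj, k2Adj]
  · exact ht x y
  · exact ⟨fun h => symm ((ht y x).mp (symm h)), fun h => symm ((ht y x).mpr (symm h))⟩

theorem fiberPerm_mem_tfaSubgroup {g : Perm (V × Bool)}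
    (hg : g ∈ autSubgroup (prodAdj Adj k2Adj)) (hsnd : ∀ p, (g p).2 = p.2) :
    (fiberPerm g hsnd false, fiberPerm g hsnd true) ∈ tfaSubgroup Adj := by
  intro x y
  have h := hg (x, false) (y, true)
  rw [apply_eq_fiberPerm hsnd, apply_eq_fiberPerm hsnd] at h
  simpa [prodAdj, k2Adj] using h

def stabilizerSndEquivTfaSubgroup [Std.Symm Adj] :
    stabilizer (autSubgroup (prodAdj Adj k2Adj)) (Prod.snd : V × Bool → Bool) ≃
      tfaSubgroup Adj where
  toFun g := ⟨_, fiberPerm_mem_tfaSubgroup g.1.2 (mem_stabilizer_snd_iff.mp g.2)⟩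
  invFun t := ⟨⟨fiberwise t, fiberwise_mem_autSubgroup t.2⟩,
    mem_stabilizer_snd_iff.mpr fun _ => rfl⟩
  left_inv g := Subtype.ext <| Subtype.ext <| Equiv.ext fun ⟨x, i⟩ => by
    rw [apply_eq_fiberPerm (mem_stabilizer_snd_iff.mp g.2) x i]
    cases i <;> rfl
  right_inv t := rfl

end TFA

section Orbit

variable {V : Type*} {Adj : V → V → Prop}

/-- The witness is the identity on the component `{(v, κ v)}` of `Γ × K₂`, and
`(v, i) ↦ (σ v, !i)` on the other. -/
theorem exists_mem_autSubgroup_prodAdj_k2Adj_snd_eq {κ : V → Bool} (hκ : IsTwoColoring Adj κ)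
    {σ : Perm V} (hσ : σ ∈ autSubgroup Adj) (hσκ : ∀ v, κ (σ v) = !κ v) :
    ∃ τ ∈ autSubgroup (prodAdj Adj k2Adj), ∀ p, (τ p).2 = κ p.1 := by
  let P : V × Bool → Prop := fun p => κ p.1 ≠ p.2
  have hP : ∀ ⦃p q⦄, prodAdj Adj k2Adj p q → (P p ↔ P q) := fun p q h =>
    not_congr (hκ.comp_fst.eq_iff_eq_of_reflTransGen isTwoColoring_snd (.single h))
  have hfP : ∀ p, P (prodCongr σ boolNot p) ↔ P p := fun p => by simp [P, hσκ]
  refine ⟨Perm.ofSubtype (Perm.subtypePerm (prodCongr σ boolNot) hfP),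
    ofSubtype_subtypePerm_mem_autSubgroup hP
      (prodCongr_mem_autSubgroup_prodAdj hσ boolNot_mem_autSubgroup_k2Adj) hfP, fun p => ?_⟩
  by_cases hp : P p
  · rw [Perm.ofSubtype_subtypePerm_of_mem hfP hp]
    simpa [P, Bool.eq_not, eq_comm] using hp
  · rw [Perm.ofSubtype_subtypePerm_of_not_mem hfP hp]
    simpa [P] using (not_not.mp hp).symm

theorem card_orbit_autSubgroup_prodAdj_k2Adj_snd [Nonempty V]
    (hconn : ∀ u v : V, Relation.ReflTransGen Adj u v) {κ : V → Bool}
    (hκ : IsTwoColoring Adj κ) {σ : Perm V} (hσ : σ ∈ autSubgroup Adj)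
    (hσκ : ∀ v, κ (σ v) = !κ v) :
    Nat.card (orbit (autSubgroup (prodAdj Adj k2Adj)) (Prod.snd : V × Bool → Bool)) = 4 := by
  obtain ⟨v₀⟩ := ‹Nonempty V›
  obtain ⟨τ, hτ, hτsnd⟩ := exists_mem_autSubgroup_prodAdj_k2Adj_snd_eq hκ hσ hσκ
  let G := autSubgroup (prodAdj Adj k2Adj)
  let f : orbit G (Prod.snd : V × Bool → Bool) → Bool × Bool := fun c =>
    (c.1 (v₀, false), c.1 (v₀, true))
  have hf : ∀ g : G, f ⟨g⁻¹ • Prod.snd, mem_orbit _ _⟩ =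
      (((g : Perm (V × Bool)) (v₀, false)).2, ((g : Perm (V × Bool)) (v₀, true)).2) := by
    intro g
    change ((((g⁻¹)⁻¹ : G) • (v₀, false)).2, (((g⁻¹)⁻¹ : G) • (v₀, true)).2) = _
    rw [inv_inv]
    rfl
  have hinj : Function.Injective f := fun c d h => Subtype.ext <|
    IsTwoColoring.eq_of_prodAdj_k2Adj hconn hκ (isTwoColoring_snd.of_mem_orbit c.2)
      (isTwoColoring_snd.of_mem_orbit d.2) (congrArg Prod.fst h) (congrArg Prod.snd h)
  have hsurj : Function.Surjective f := by
    let s : G := ⟨prodCongr (Equiv.refl V) boolNot,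
      prodCongr_mem_autSubgroup_prodAdj (one_mem _) boolNot_mem_autSubgroup_k2Adj⟩
    rintro ⟨a, b⟩
    obtain ⟨g, hg⟩ : ∃ g : G,
        (((g : Perm (V × Bool)) (v₀, false)).2, ((g : Perm (V × Bool)) (v₀, true)).2) = (a, b) := by
      cases a <;> cases b
      · cases h : κ v₀
        · exact ⟨⟨τ, hτ⟩, by simp [hτsnd, h]⟩
        · exact ⟨s * ⟨τ, hτ⟩, by simp [s, hτsnd, h]⟩
      · exact ⟨1, rfl⟩
      · exact ⟨s, rfl⟩
      · cases h : κ v₀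
        · exact ⟨s * ⟨τ, hτ⟩, by simp [s, hτsnd, h]⟩
        · exact ⟨⟨τ, hτ⟩, by simp [hτsnd, h]⟩
    exact ⟨_, (hf g).trans hg⟩
  rw [Nat.card_congr (Equiv.ofBijective f ⟨hinj, hsurj⟩)]
  simp

theorem card_autSubgroup_prodAdj_k2Adj [Nonempty V] [Std.Symm Adj]
    (hconn : ∀ u v : V, Relation.ReflTransGen Adj u v) {κ : V → Bool}
    (hκ : IsTwoColoring Adj κ) {σ : Perm V} (hσ : σ ∈ autSubgroup Adj)
    (hσκ : ∀ v, κ (σ v) = !κ v) :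
    Nat.card (autSubgroup (prodAdj Adj k2Adj)) = 4 * Nat.card (tfaSubgroup Adj) := by
  rw [← Nat.card_congr (orbitProdStabilizerEquivGroup _ (Prod.snd : V × Bool → Bool)),
    Nat.card_prod, card_orbit_autSubgroup_prodAdj_k2Adj_snd hconn hκ hσ hσκ,
    Nat.card_congr stabilizerSndEquivTfaSubgroup]

end Orbit

theorem stmt_6_general {V : Type*} (Adj : V → V → Prop) (hsymm : Symmetric Adj)
    (hconn : ∀ u v : V, Relation.ReflTransGen Adj u v)
    (U W : Set V) (hdisj : Disjoint U W) (hcover : U ∪ W = Set.univ)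
    (hU : U.Nonempty)
    (hbip : ∀ u v, Adj u v → (u ∈ U ∧ v ∈ W) ∨ (u ∈ W ∧ v ∈ U))
    (hswap : ∃ σ ∈ autSubgroup Adj, ⇑σ '' U = W ∧ ⇑σ '' W = U) :
    Nat.card ↥(autSubgroup (prodAdj Adj k2Adj)) = 4 * Nat.card ↥(tfaSubgroup Adj) := by
  classical
  obtain ⟨σ, hσ, -, hσW⟩ := hswap
  have : Nonempty V := ⟨hU.some⟩
  have : Std.Symm Adj := ⟨fun _ _ h => hsymm h⟩
  have hmemW : ∀ v, v ∈ W ↔ v ∉ U := fun v =>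
    ⟨fun hw hu => Set.disjoint_left.mp hdisj hu hw,
      fun hu => (hcover ▸ Set.mem_univ v : v ∈ U ∪ W).resolve_left hu⟩
  have hσU : ∀ v, σ v ∈ U ↔ v ∈ W := fun v => by rw [← hσW, σ.injective.mem_set_image]
  refine card_autSubgroup_prodAdj_k2Adj hconn (κ := fun v => decide (v ∈ U)) ?_ hσ
    fun v => by simp [hσU, hmemW]
  intro u v huv
  rcases hbip u v huv with ⟨hu, hv⟩ | ⟨hu, hv⟩ <;> simp_all

/-- If `Γ` is a connected bipartite graph with bipartition `{U, W}`
admitting an automorphism swapping `U` and `W`, then `|Aut(Γ × K₂)| = 4 |TFA(Γ)|`. -/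
theorem stmt_6 {V : Type*} [Fintype V] (Adj : V → V → Prop) (hsymm : Symmetric Adj)
    (hconn : ∀ u v : V, Relation.ReflTransGen Adj u v)
    (U W : Set V) (hdisj : Disjoint U W) (hcover : U ∪ W = Set.univ)
    (hU : U.Nonempty) (hW : W.Nonempty)
    (hbip : ∀ u v, Adj u v → (u ∈ U ∧ v ∈ W) ∨ (u ∈ W ∧ v ∈ U))
    (hswap : ∃ σ ∈ autSubgroup Adj, ⇑σ '' U = W ∧ ⇑σ '' W = U) :
    Nat.card ↥(autSubgroup (prodAdj Adj k2Adj)) = 4 * Nat.card ↥(tfaSubgroup Adj) :=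
  stmt_6_general Adj hsymm hconn U W hdisj hcover hU hbip hswap
end

section
/- Let Γ be a connected bipartite graph with bipartition {U,W}, and let (α,β) be a TF-automorphism of Γ. Then either both α and β setwise stabilize U and W, or both α and β interchange U and W. -/
theorem forall_or_forall_not_of_adj_imp_iff {V : Type*} {Adj : V → V → Prop}
    (hconn : ∀ u v : V, Relation.ReflTransGen Adj u v) {p : V → Prop}
    (hp : ∀ x y, Adj x y → (p x ↔ p y)) : (∀ x, p x) ∨ ∀ x, ¬ p x := by
  have hconst : ∀ x y, p x ↔ p y := fun x y => by
    induction hconn x y with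
    | refl => rfl
    | tail _ hadj ih => exact ih.trans (hp _ _ hadj)
  by_cases h : ∃ x, p x
  · obtain ⟨x₀, hx₀⟩ := h
    exact Or.inl fun x => (hconst x₀ x).1 hx₀
  · exact Or.inr (not_exists.1 h)

theorem Equiv.Perm.image_eq_and_image_compl_eq {V : Type*} (σ : Equiv.Perm V) {S T : Set V}
    (h : ∀ x, σ x ∈ T ↔ x ∈ S) : ⇑σ '' S = T ∧ ⇑σ '' Sᶜ = Tᶜ := by
  have hS : ⇑σ '' S = T := (Set.ext h : ⇑σ ⁻¹' T = S) ▸ σ.image_preimage T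
  exact ⟨hS, hS ▸ Set.image_compl_eq σ.bijective⟩

theorem tfaSubgroup_preserves_or_swaps_sides {V : Type*} {Adj : V → V → Prop}
    (hsymm : ∀ x y, Adj x y → Adj y x)
    (hconn : ∀ u v : V, Relation.ReflTransGen Adj u v) {U : Set V}
    (hU : U.Nonempty) (hUc : Uᶜ.Nonempty) (hbip : ∀ u v, Adj u v → (u ∈ U ↔ v ∉ U))
    {α β : Equiv.Perm V} (hTF : (α, β) ∈ tfaSubgroup Adj) :
    (∀ x, (α x ∈ U ↔ x ∈ U) ∧ (β x ∈ U ↔ x ∈ U)) ∨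
      ∀ x, (α x ∈ U ↔ x ∉ U) ∧ (β x ∈ U ↔ x ∉ U) := by
  have hside : ∀ x y, Adj x y → (α x ∈ U ↔ β y ∉ U) := fun x y h =>
    hbip _ _ ((hTF x y).1 h)
  have hside' : ∀ x y, Adj x y → (α y ∈ U ↔ β x ∉ U) := fun x y h =>
    hside y x (hsymm x y h)
  have hsame : ∀ x, α x ∈ U ↔ β x ∈ U := by
    refine (forall_or_forall_not_of_adj_imp_iff hconn fun x y h => ?_).resolve_right ?_
    · have := hside x y h; have := hside' x y h; tauto
    · intro hdiff
      have hα : ∀ x y, Adj x y → (α x ∈ U ↔ α y ∈ U) := fun x y h => by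
        have := hside x y h; have := hdiff y; tauto
      rcases forall_or_forall_not_of_adj_imp_iff hconn hα with hin | hout
      · obtain ⟨w, hw⟩ := hUc
        exact hw (by simpa using hin (α.symm w))
      · obtain ⟨u, hu⟩ := hU
        exact hout (α.symm u) (by simpa using hu)
  have hkeep : ∀ x y, Adj x y → ((α x ∈ U ↔ x ∈ U) ↔ (α y ∈ U ↔ y ∈ U)) := fun x y h => by
    have := hside x y h; have := hsame y; have := hbip x y h; tauto
  rcases forall_or_forall_not_of_adj_imp_iff hconn hkeep with hpres | hswap
  · exact Or.inl fun x => ⟨hpres x, (hsame x).symm.trans (hpres x)⟩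
  · refine Or.inr fun x => ?_
    have := hswap x; have := hsame x; tauto

theorem stmt_7_general {V : Type*} (Adj : V → V → Prop) (hsymm : Symmetric Adj)
    (hconn : ∀ u v : V, Relation.ReflTransGen Adj u v)
    (U W : Set V) (hdisj : Disjoint U W) (hcover : U ∪ W = Set.univ)
    (hU : U.Nonempty) (hW : W.Nonempty)
    (hbip : ∀ u v, Adj u v → (u ∈ U ∧ v ∈ W) ∨ (u ∈ W ∧ v ∈ U))
    (α β : Equiv.Perm V) (hTF : (α, β) ∈ tfaSubgroup Adj) :
    (⇑α '' U = U ∧ ⇑α '' W = W ∧ ⇑β '' U = U ∧ ⇑β '' W = W) ∨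
    (⇑α '' U = W ∧ ⇑α '' W = U ∧ ⇑β '' U = W ∧ ⇑β '' W = U) := by
  obtain rfl : W = Uᶜ := (IsCompl.compl_eq ⟨hdisj, codisjoint_iff.mpr hcover⟩).symm
  have hbip' : ∀ u v, Adj u v → (u ∈ U ↔ v ∉ U) := fun u v h => by
    have := hbip u v h; simp only [Set.mem_compl_iff] at this; tauto
  rcases tfaSubgroup_preserves_or_swaps_sides hsymm hconn hU hW hbip' hTF with hpres | hswap
  · obtain ⟨hαU, hαW⟩ := α.image_eq_and_image_compl_eq fun x => (hpres x).1
    obtain ⟨hβU, hβW⟩ := β.image_eq_and_image_compl_eq fun x => (hpres x).2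
    exact Or.inl ⟨hαU, hαW, hβU, hβW⟩
  · obtain ⟨hαW, hαU⟩ := α.image_eq_and_image_compl_eq (S := U) (T := Uᶜ) fun x =>
      (iff_not_comm.1 (hswap x).1).symm
    obtain ⟨hβW, hβU⟩ := β.image_eq_and_image_compl_eq (S := U) (T := Uᶜ) fun x =>
      (iff_not_comm.1 (hswap x).2).symm
    rw [compl_compl] at hαU hβU
    exact Or.inr ⟨hαW, hαU, hβW, hβU⟩

/-- Let `Γ` be a connected bipartite graph with bipartition `{U, W}` and
`(α, β)` a TF-automorphism of `Γ`. Then either both `α` and `β` setwise stabilize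
`U` and `W`, or both interchange `U` and `W`. -/
theorem stmt_7 {V : Type*} [Fintype V] (Adj : V → V → Prop) (hsymm : Symmetric Adj)
    (hconn : ∀ u v : V, Relation.ReflTransGen Adj u v)
    (U W : Set V) (hdisj : Disjoint U W) (hcover : U ∪ W = Set.univ)
    (hU : U.Nonempty) (hW : W.Nonempty)
    (hbip : ∀ u v, Adj u v → (u ∈ U ∧ v ∈ W) ∨ (u ∈ W ∧ v ∈ U))
    (α β : Equiv.Perm V) (hTF : (α, β) ∈ tfaSubgroup Adj) :
    (⇑α '' U = U ∧ ⇑α '' W = W ∧ ⇑β '' U = U ∧ ⇑β '' W = W) ∨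
    (⇑α '' U = W ∧ ⇑α '' W = U ∧ ⇑β '' U = W ∧ ⇑β '' W = U) :=
  stmt_7_general Adj hsymm hconn U W hdisj hcover hU hW hbip α β hTF
end

section
/- Let Γ = Cay(Z₈, {±1,±2}) and let n ≥ 6 be even. Then the map τ on Z₈ × Zₙ defined by (u,i)^τ = (5u+4i, i) is an automorphism of the direct product Γ × Cₙ. -/
/-- Adjacency of the Cayley graph `Cay(Z₈, {±1, ±2})`. -/
def cayAdj : ZMod 8 → ZMod 8 → Prop := fun u v => u - v ∈ ({1, -1, 2, -2} : Set (ZMod 8))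

/-! Since `n` is even, `i ↦ 4i` is well defined from `ℤₙ` to `ℤ₈`, so along an edge `i ~ j` of `Cₙ`
the images of `(u, i)` and `(v, j)` have first coordinates differing by `5(u - v) ± 4 = 5(u - v) + 4`.
The bijection `x ↦ 5x + 4` of `ℤ₈` maps `{±1, ±2}` onto itself, and the map is an involution since
`25 ≡ 1` and `24 ≡ 0 (mod 8)`. -/

theorem ZMod.natCast_mul_val_add {m n k : ℕ} [NeZero n] (h : m ∣ k * n) (i j : ZMod n) :
    ((k * (i + j).val : ℕ) : ZMod m) = ((k * i.val + k * j.val : ℕ) : ZMod m) := by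
  rw [ZMod.natCast_eq_natCast_iff, ZMod.val_add, ← Nat.mul_mod_mul_left, ← mul_add]
  exact Nat.mod_mod_of_dvd _ h

theorem four_mul_val_sub_of_cycAdj {n : ℕ} [NeZero n] (hn : Even n) {i j : ZMod n}
    (h : cycAdj n i j) : 4 * (i.val : ZMod 8) - 4 * (j.val : ZMod 8) = 4 := by
  have h8 : 8 ∣ 4 * n := by
    obtain ⟨m, rfl⟩ := hn
    exact ⟨m, by ring⟩
  have hval : ∀ a : ZMod n, 4 * ((a + 1).val : ZMod 8) = 4 * (a.val : ZMod 8) + 4 := by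
    intro a
    have := ZMod.natCast_mul_val_add h8 a 1
    rw [ZMod.val_one'' (by rintro rfl; exact Nat.not_even_one hn)] at this
    push_cast at this
    exact this
  rcases h with rfl | rfl
  · rw [hval]; ring
  · rw [hval]
    linear_combination (-1 : ZMod 8) * (by decide : (8 : ZMod 8) = 0)

theorem cayAdj_five_mul_add_iff {c d : ZMod 8} (h : c - d = 4) (u v : ZMod 8) :
    cayAdj (5 * u + c) (5 * v + d) ↔ cayAdj u v := by
  have hsub : 5 * u + c - (5 * v + d) = 5 * (u - v) + 4 := by linear_combination h
  have key : ∀ x : ZMod 8, 5 * x + 4 ∈ ({1, -1, 2, -2} : Set (ZMod 8)) ↔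
      x ∈ ({1, -1, 2, -2} : Set (ZMod 8)) := by decide
  unfold cayAdj
  rw [hsub]
  exact key (u - v)

theorem five_mul_five_mul_add (u c : ZMod 8) : 5 * (5 * u + 4 * c) + 4 * c = u := by
  linear_combination (3 * u + 3 * c) * (by decide : (8 : ZMod 8) = 0)

def twist (n : ℕ) : Equiv.Perm (ZMod 8 × ZMod n) :=
  Function.Involutive.toPerm (fun p => (5 * p.1 + 4 * (p.2.val : ZMod 8), p.2))
    fun p => Prod.ext (five_mul_five_mul_add p.1 _) rfl

theorem twist_mem_autSubgroup {n : ℕ} [NeZero n] (hn : Even n) :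
    twist n ∈ autSubgroup (prodAdj cayAdj (cycAdj n)) := by
  rintro ⟨u, i⟩ ⟨v, j⟩
  exact and_congr_left fun h =>
    (cayAdj_five_mul_add_iff (four_mul_val_sub_of_cycAdj hn h) u v).symm

/-- Let `Γ = Cay(Z₈, {±1,±2})` and let `n ≥ 6` be even. The map
`(u, i) ↦ (5u + 4i, i)` is an automorphism of the direct product `Γ × Cₙ`. -/
theorem stmt_11 (n : ℕ) (hn : 6 ≤ n) (hev : Even n) :
    ∃ τ : Equiv.Perm (ZMod 8 × ZMod n),
      (∀ (u : ZMod 8) (i : ZMod n), τ (u, i) = (5 * u + 4 * (i.val : ZMod 8), i)) ∧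
      τ ∈ autSubgroup (prodAdj cayAdj (cycAdj n)) := by
  have : NeZero n := ⟨by omega⟩
  exact ⟨twist n, fun _ _ => rfl, twist_mem_autSubgroup hev⟩
end

section
/- Let Γ and Σ be connected graphs with Γ non-bipartite and Σ bipartite with bipartition {U,W}. Then the direct product Γ × Σ is connected and bipartite with bipartition {V(Γ)×U, V(Γ)×W}. -/
section

variable {X Y : Type*}

inductive HasWalk (A : X → X → Prop) : ℕ → X → X → Prop
  | nil (u : X) : HasWalk A 0 u u
  | cons {n : ℕ} {u v w : X} : A u v → HasWalk A n v w → HasWalk A (n + 1) u w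

namespace HasWalk

variable {A : X → X → Prop} {m n : ℕ} {u v w : X}

theorem single (h : A u v) : HasWalk A 1 u v := .cons h (.nil v)

theorem append (h₁ : HasWalk A m u v) (h₂ : HasWalk A n v w) : HasWalk A (m + n) u w := by
  induction h₁ with
  | nil => rwa [Nat.zero_add]
  | cons hA _ ih => rw [Nat.add_right_comm]; exact .cons hA (ih h₂)

theorem reverse (hs : Symmetric A) (h : HasWalk A n u v) : HasWalk A n v u := by
  induction h with
  | nil u => exact .nil u
  | cons hA _ ih => exact ih.append (.single (hs hA))

theorem reflTransGen (h : HasWalk A n u v) : Relation.ReflTransGen A u v := by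
  induction h with
  | nil => rfl
  | cons hA _ ih => exact .head hA ih

theorem add_two_mul (hs : Symmetric A) (huw : A u w) (h : HasWalk A n u v) (j : ℕ) :
    HasWalk A (n + 2 * j) u v := by
  induction j with
  | zero => exact h
  | succ j ih =>
    have := (HasWalk.cons huw (.single (hs huw))).append ih
    rwa [show 1 + 1 + (n + 2 * j) = n + 2 * (j + 1) by ring] at this

theorem exists_adj_of_pos (h : HasWalk A n u v) (hn : 0 < n) : ∃ w, A u w := by
  cases h with
  | nil => omega
  | cons huw _ => exact ⟨_, huw⟩

theorem prod {B : Y → Y → Prop} {s t : Y} (h₁ : HasWalk A n u v) (h₂ : HasWalk B n s t) :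
    HasWalk (prodAdj A B) n (u, s) (v, t) := by
  induction h₁ generalizing s with
  | nil => cases h₂; exact .nil _
  | cons hA _ ih =>
    obtain _ | ⟨hB, h₂⟩ := h₂
    exact .cons ⟨hA, hB⟩ (ih h₂)

end HasWalk

variable {A : X → X → Prop}

theorem exists_hasWalk_of_reflTransGen {u v : X} (h : Relation.ReflTransGen A u v) :
    ∃ n, HasWalk A n u v := by
  induction h with
  | refl => exact ⟨0, .nil _⟩
  | tail _ hA ih =>
    obtain ⟨n, hn⟩ := ih
    exact ⟨n + 1, hn.append (.single hA)⟩

theorem exists_adj_of_reflTransGen_of_ne {u v : X} (h : Relation.ReflTransGen A u v)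
    (hne : u ≠ v) : ∃ w, A u w := by
  obtain rfl | ⟨w, hw, -⟩ := h.cases_head
  · exact absurd rfl hne
  · exact ⟨w, hw⟩

/-- The parity of the length of a walk from a base vertex is a proper 2-colouring. -/
theorem exists_two_coloring_of_forall_hasWalk_even (hs : Symmetric A)
    (hconn : ∀ u v : X, Relation.ReflTransGen A u v)
    (heven : ∀ u n, HasWalk A n u u → Even n) :
    ∃ c : X → Bool, ∀ u v, A u v → c u ≠ c v := by
  cases isEmpty_or_nonempty X with
  | inl _ => exact ⟨isEmptyElim, fun u => isEmptyElim u⟩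
  | inr h =>
    obtain ⟨v₀⟩ := h
    choose len hlen using fun v => exists_hasWalk_of_reflTransGen (hconn v₀ v)
    refine ⟨fun v => decide (Even (len v)), fun u v huv hc => ?_⟩
    have hclosed := heven v₀ _ (((hlen u).append (.single huv)).append ((hlen v).reverse hs))
    simp only [decide_eq_decide] at hc
    rw [Nat.even_add, Nat.even_add_one, hc] at hclosed
    tauto

theorem exists_hasWalk_odd_of_not_bipartite (hs : Symmetric A)
    (hconn : ∀ u v : X, Relation.ReflTransGen A u v)
    (hnb : ¬∃ c : X → Bool, ∀ u v, A u v → c u ≠ c v) :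
    ∃ c n, Odd n ∧ HasWalk A n c c := by
  by_contra! h
  exact hnb (exists_two_coloring_of_forall_hasWalk_even hs hconn
    fun u n hn => Nat.not_odd_iff_even.mp (h u n · hn))

theorem exists_forall_ge_hasWalk_of_odd (hs : Symmetric A)
    (hconn : ∀ u v : X, Relation.ReflTransGen A u v) {c : X} {o : ℕ} (ho : Odd o)
    (hc : HasWalk A o c c) (u v : X) :
    ∃ N, ∀ n ≥ N, HasWalk A n u v := by
  obtain ⟨a, hua⟩ := exists_hasWalk_of_reflTransGen (hconn u c)
  obtain ⟨b, hcv⟩ := exists_hasWalk_of_reflTransGen (hconn c v)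
  have hodd := hua.append (hc.append hcv)
  obtain ⟨t, rfl⟩ := ho
  obtain ⟨w, huw⟩ := hodd.exists_adj_of_pos (by omega)
  -- the walks `u → c → v` with and without the odd loop cover both parities
  refine ⟨a + (2 * t + 1 + b), fun n hn => ?_⟩
  obtain ⟨j, hj | hj⟩ := Nat.even_or_odd' (n - (a + b))
  · have := (hua.append hcv).add_two_mul hs huw j
    rwa [show a + b + 2 * j = n by omega] at this
  · have := hodd.add_two_mul hs huw (j - t)
    rwa [show a + (2 * t + 1 + b) + 2 * (j - t) = n by omega] at this

end

theorem stmt_14_general {VG VS : Type*}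
    (AdjG : VG → VG → Prop) (hsG : Symmetric AdjG)
    (hconnG : ∀ u v : VG, Relation.ReflTransGen AdjG u v)
    (hnbG : ¬∃ c : VG → Bool, ∀ u v, AdjG u v → c u ≠ c v)
    (AdjS : VS → VS → Prop) (hsS : Symmetric AdjS)
    (hconnS : ∀ u v : VS, Relation.ReflTransGen AdjS u v)
    (U W : Set VS) (hdisj : Disjoint U W)
    (hU : U.Nonempty) (hW : W.Nonempty)
    (hbip : ∀ u v, AdjS u v → (u ∈ U ∧ v ∈ W) ∨ (u ∈ W ∧ v ∈ U)) :
    (∀ x y : VG × VS, Relation.ReflTransGen (prodAdj AdjG AdjS) x y) ∧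
    (∀ x y : VG × VS, prodAdj AdjG AdjS x y →
      (x.2 ∈ U ∧ y.2 ∈ W) ∨ (x.2 ∈ W ∧ y.2 ∈ U)) := by
  refine ⟨fun ⟨g₁, s₁⟩ ⟨g₂, s₂⟩ => ?_, fun x y h => hbip x.2 y.2 h.2⟩
  obtain ⟨c, o, ho, hc⟩ := exists_hasWalk_odd_of_not_bipartite hsG hconnG hnbG
  obtain ⟨N, hN⟩ := exists_forall_ge_hasWalk_of_odd hsG hconnG ho hc g₁ g₂
  obtain ⟨w, hw⟩ : ∃ w, AdjS s₁ w := by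
    obtain ⟨u, hu⟩ := hU
    obtain ⟨w, hw⟩ := hW
    by_cases hsu : s₁ = u
    · exact exists_adj_of_reflTransGen_of_ne (hconnS s₁ w)
        fun h => hdisj.ne_of_mem hu hw (hsu.symm.trans h)
    · exact exists_adj_of_reflTransGen_of_ne (hconnS s₁ u) hsu
  obtain ⟨m, hm⟩ := exists_hasWalk_of_reflTransGen (hconnS s₁ s₂)
  exact ((hN _ (by omega)).prod (hm.add_two_mul hsS hw N)).reflTransGen

/-- Let `Γ` be connected non-bipartite and `Σ` connected bipartite with
bipartition `{U, W}`. Then `Γ × Σ` is connected and bipartite with bipartition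
`{V(Γ) × U, V(Γ) × W}`. -/
theorem stmt_14 {VG VS : Type*} [Fintype VG] [Fintype VS]
    (AdjG : VG → VG → Prop) (hsG : Symmetric AdjG)
    (hconnG : ∀ u v : VG, Relation.ReflTransGen AdjG u v)
    (hnbG : ¬∃ c : VG → Bool, ∀ u v, AdjG u v → c u ≠ c v)
    (AdjS : VS → VS → Prop) (hsS : Symmetric AdjS)
    (hconnS : ∀ u v : VS, Relation.ReflTransGen AdjS u v)
    (U W : Set VS) (hdisj : Disjoint U W) (hcover : U ∪ W = Set.univ)
    (hU : U.Nonempty) (hW : W.Nonempty)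
    (hbip : ∀ u v, AdjS u v → (u ∈ U ∧ v ∈ W) ∨ (u ∈ W ∧ v ∈ U)) :
    (∀ x y : VG × VS, Relation.ReflTransGen (prodAdj AdjG AdjS) x y) ∧
    (∀ x y : VG × VS, prodAdj AdjG AdjS x y →
      (x.2 ∈ U ∧ y.2 ∈ W) ∨ (x.2 ∈ W ∧ y.2 ∈ U)) :=
  stmt_14_general AdjG hsG hconnG hnbG AdjS hsS hconnS U W hdisj hU hW hbip
end

section
/- Let Γ be a connected graph and n ≥ 3. Suppose V(Γ) admits a partition {L₁,…,Lₙ} into independent sets and a partition 𝒫 satisfying: (a) |P ∩ Lᵢ| = 1 for all P ∈ 𝒫 and i; (b) whenever there are edges of Γ from P to P′ and from Lᵢ to Lⱼ, there is an edge from P∩Lᵢ to P′∩Lⱼ; (c) for all P,P′ the quantity |N_Γ(x) ∩ P′| equals a constant d_{P,P′} ∈ {0,2} for all x ∈ P. Then Γ ≅ Δ × Cₙ for some graph Δ. -/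
/-!
By (a), a vertex is determined by its part and its layer, and (b) then says exactly that `x ~ y`
iff the parts of `x, y` are adjacent in the quotient `Δ` by the parts and their layers are adjacent
in the quotient `Σ` by the layers; so `Γ ≅ Δ × Σ`. The layer graph `Σ` is loopless (the layers are
independent) and connected (as `Γ` is). It is `2`-regular: given an edge between parts `P, P'`,
the neighbours in `P'` of the vertex of `P` in layer `i` lie in distinct layers by (a), by (b) these
layers are all the `Σ`-neighbours of `i`, and by (c) there are `d_{P,P'} = 2` of them. A connected
`2`-regular finite graph is a cycle.
-/

open Function

theorem exists_forall_mem_iff_eq {V ι : Type*} {L : ι → Set V}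
    (hdisj : Pairwise fun i j => Disjoint (L i) (L j)) (hcover : ⋃ i, L i = Set.univ) :
    ∃ c : V → ι, ∀ x i, x ∈ L i ↔ c x = i := by
  have hmem x : ∃ i, x ∈ L i := Set.mem_iUnion.mp (hcover ▸ Set.mem_univ x)
  choose c hc using hmem
  refine ⟨c, fun x i => ⟨fun hx => ?_, fun h => h ▸ hc x⟩⟩
  by_contra hne
  exact Set.disjoint_left.mp (hdisj hne) (hc x) hx

namespace SimpleGraph

variable {V : Type*} {G : SimpleGraph V}

lemma Connected.eq_univ_of_adj_closed (hG : G.Connected) {s : Set V} (hs : s.Nonempty)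
    (hclosed : ∀ ⦃u v⦄, G.Adj u v → u ∈ s → v ∈ s) : s = Set.univ := by
  obtain ⟨u, hu⟩ := hs
  refine Set.eq_univ_of_forall fun v => ?_
  induction (reachable_iff_reflTransGen u v).mp (hG u v) with
  | refl => exact hu
  | tail _ hadj ih => exact hclosed hadj ih

lemma ncard_neighborSet_cycleGraph {n : ℕ} (hn : 2 < n) (a : Fin n) :
    ((cycleGraph n).neighborSet a).ncard = 2 := by
  obtain ⟨k, rfl⟩ : ∃ k, n = k + 3 := ⟨n - 3, by omega⟩
  rw [Set.ncard_eq_toFinset_card', ← neighborFinset_def, card_neighborFinset_eq_degree]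
  exact cycleGraph_degree_three_le

lemma exists_isCycle_of_ncard_neighborSet_eq_two [Finite V] [Nonempty V]
    (h2 : ∀ v, (G.neighborSet v).ncard = 2) : ∃ (v : V) (p : G.Walk v v), p.IsCycle := by
  obtain ⟨v⟩ := ‹Nonempty V›
  have hne : (G.neighborSet v).Nonempty := Set.nonempty_of_ncard_ne_zero (by simp [h2])
  obtain ⟨p, hp, -⟩ := IsCycles.exists_cycle_toSubgraph_verts_eq_connectedComponentSupp
    (c := G.connectedComponentMk v) (fun v _ => h2 v) rfl hne
  exact ⟨v, p, hp⟩

lemma Copy.neighborSet_eq_image {W : Type*} {H : SimpleGraph W} (φ : Copy H G) [Finite V]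
    (a : W) (h : (G.neighborSet (φ a)).ncard ≤ (H.neighborSet a).ncard) :
    G.neighborSet (φ a) = φ '' H.neighborSet a := by
  refine (Set.eq_of_subset_of_ncard_le ?_ ?_ (Set.toFinite _)).symm
  · rintro _ ⟨b, hb, rfl⟩
    exact φ.toHom.map_adj hb
  · rwa [Set.ncard_image_of_injective _ (show Injective φ from φ.injective)]

/- A copy of a cycle in a `2`-regular graph leaves no room for further edges at its vertices, so
its vertex set is closed under adjacency, hence everything. -/
theorem Connected.nonempty_cycleGraph_iso [Fintype V] (hG : G.Connected)
    (h2 : ∀ v, (G.neighborSet v).ncard = 2) : Nonempty (cycleGraph (Fintype.card V) ≃g G) := by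
  have := hG.nonempty
  obtain ⟨m, hm, ⟨φ⟩⟩ : ∃ m, 2 < m ∧ cycleGraph m ⊑ G := by
    obtain ⟨v, p, hp⟩ := exists_isCycle_of_ncard_neighborSet_eq_two h2
    exact ⟨p.length, hp.three_le_length,
      (cycleGraph_isContained_iff hp.three_le_length).mpr ⟨v, p, hp, rfl⟩⟩
  have hφ : Injective φ := φ.injective
  have hnbr a : G.neighborSet (φ a) = φ '' (cycleGraph m).neighborSet a :=
    φ.neighborSet_eq_image a (by rw [h2, ncard_neighborSet_cycleGraph hm])
  have hsurj : Surjective φ := by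
    refine Set.range_eq_univ.mp (hG.eq_univ_of_adj_closed ⟨_, ⟨0, by omega⟩, rfl⟩ ?_)
    rintro _ w hadj ⟨a, rfl⟩
    rw [← mem_neighborSet, hnbr] at hadj
    exact Set.mem_range_of_mem_image _ _ hadj
  let ψ : cycleGraph m ≃g G :=
    { Equiv.ofBijective φ ⟨hφ, hsurj⟩ with
      map_rel_iff' := fun {a b} => by
        refine ⟨fun (h : G.Adj (φ a) (φ b)) => ?_, φ.toHom.map_adj⟩
        rwa [← mem_neighborSet, hnbr, hφ.mem_set_image] at h }
  obtain rfl : m = Fintype.card V := by simpa using Fintype.card_congr ψ.toEquiv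
  exact ⟨ψ⟩

lemma cycleGraph_adj_iff_cycAdj {k : ℕ} (u v : Fin (k + 2)) :
    (cycleGraph (k + 2)).Adj u v ↔ cycAdj (k + 2) u v := by
  rw [cycleGraph_adj, sub_eq_iff_eq_add', sub_eq_iff_eq_add']
  rfl

theorem Connected.exists_equiv_cycAdj [Fintype V] {n : ℕ} (hn : 2 ≤ n)
    (hcard : Fintype.card V = n) (hG : G.Connected) (h2 : ∀ v, (G.neighborSet v).ncard = 2) :
    ∃ e : V ≃ ZMod n, ∀ u v, G.Adj u v ↔ cycAdj n (e u) (e v) := by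
  obtain ⟨ψ⟩ := hG.nonempty_cycleGraph_iso h2
  obtain ⟨k, rfl⟩ : ∃ k, n = k + 2 := ⟨n - 2, by omega⟩
  rw [hcard] at ψ
  refine ⟨ψ.symm.toEquiv, fun u v => ?_⟩
  rw [← ψ.symm.map_adj_iff, cycleGraph_adj_iff_cycAdj]
  rfl

end SimpleGraph

section ProductDecomposition

variable {V α β : Type*} {Adj : V → V → Prop} {part : V → α} {layer : V → β}
  (hinj : Injective fun x => (part x, layer x))
  (hb : ∀ x y x' y', Adj x y → Adj x' y' → ∃ u w, part u = part x ∧ layer u = layer x' ∧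
    part w = part y ∧ layer w = layer y' ∧ Adj u w)

include hinj hb

theorem adj_iff_map_part_and_map_layer (x y : V) :
    Adj x y ↔ Relation.Map Adj part part (part x) (part y) ∧
      Relation.Map Adj layer layer (layer x) (layer y) := by
  refine ⟨fun h => ⟨⟨x, y, h, rfl, rfl⟩, ⟨x, y, h, rfl, rfl⟩⟩, ?_⟩
  rintro ⟨⟨x₁, y₁, h₁, hx₁, hy₁⟩, ⟨x₂, y₂, h₂, hx₂, hy₂⟩⟩
  obtain ⟨u, w, hu₁, hu₂, hw₁, hw₂, huw⟩ := hb x₁ y₁ x₂ y₂ h₁ h₂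
  obtain rfl : u = x := hinj (Prod.ext (hu₁.trans hx₁) (hu₂.trans hx₂))
  obtain rfl : w = y := hinj (Prod.ext (hw₁.trans hy₁) (hw₂.trans hy₂))
  exact huw

-- `layer` maps these neighbours of `x` bijectively onto the layers adjacent to `layer x`.
theorem ncard_setOf_map_layer {x : V} {p : α} (hp : Relation.Map Adj part part (part x) p) :
    {j | Relation.Map Adj layer layer (layer x) j}.ncard = {y | part y = p ∧ Adj x y}.ncard := by
  have himage : {j | Relation.Map Adj layer layer (layer x) j} =
      layer '' {y | part y = p ∧ Adj x y} := by
    ext j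
    refine ⟨?_, fun ⟨y, ⟨_, h⟩, hy⟩ => ⟨x, y, h, rfl, hy⟩⟩
    rintro ⟨x₂, y₂, h₂, hx₂, rfl⟩
    obtain ⟨x₁, y₁, h₁, hx₁, hy₁⟩ := hp
    obtain ⟨u, w, hu₁, hu₂, hw₁, hw₂, huw⟩ := hb x₁ y₁ x₂ y₂ h₁ h₂
    obtain rfl : u = x := hinj (Prod.ext (hu₁.trans hx₁) (hu₂.trans hx₂))
    exact ⟨w, ⟨hw₁.trans hy₁, huw⟩, hw₂⟩
  rw [himage, Set.InjOn.ncard_image]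
  rintro y ⟨hy, -⟩ y' ⟨hy', -⟩ h
  exact hinj (Prod.ext (hy.trans hy'.symm) h)

end ProductDecomposition

def quotientGraph {V β : Type*} (Adj : V → V → Prop) (hsymm : Symmetric Adj) (f : V → β)
    (hf : ∀ x y, Adj x y → f x ≠ f y) : SimpleGraph β where
  Adj := Relation.Map Adj f f
  symm := ⟨fun _ _ ⟨x, y, h, hx, hy⟩ => ⟨y, x, hsymm h, hy, hx⟩⟩
  loopless := ⟨fun _ ⟨x, y, h, hx, hy⟩ => hf x y h (hx.trans hy.symm)⟩

theorem quotientGraph_preconnected {V β : Type*} {Adj : V → V → Prop} (hsymm : Symmetric Adj)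
    {f : V → β} (hf : ∀ x y, Adj x y → f x ≠ f y) (hconn : ∀ u v, Relation.ReflTransGen Adj u v)
    (hsurj : Surjective f) : (quotientGraph Adj hsymm f hf).Preconnected := by
  intro i j
  obtain ⟨x, rfl⟩ := hsurj i
  obtain ⟨y, rfl⟩ := hsurj j
  rw [SimpleGraph.reachable_iff_reflTransGen]
  exact Relation.ReflTransGen.lift f (fun x y h => ⟨x, y, h, rfl, rfl⟩) x y (hconn x y)

theorem exists_equiv_adj_iff_map_part_and_cycAdj {V α : Type*} [Finite V]
    {Adj : V → V → Prop} (hsymm : Symmetric Adj) (hconn : ∀ u v, Relation.ReflTransGen Adj u v)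
    {n : ℕ} (hn : 2 ≤ n) {part : V → α} {layer : V → ZMod n}
    (hbij : Bijective fun x => (part x, layer x))
    (hind : ∀ x y, Adj x y → layer x ≠ layer y)
    (hb : ∀ x y x' y', Adj x y → Adj x' y' → ∃ u w, part u = part x ∧ layer u = layer x' ∧
      part w = part y ∧ layer w = layer y' ∧ Adj u w)
    (hc : ∀ p q, ∃ d : ℕ, (d = 0 ∨ d = 2) ∧
      ∀ x, part x = p → {y | part y = q ∧ Adj x y}.ncard = d) :
    ∃ σ : ZMod n ≃ ZMod n, ∀ x y, Adj x y ↔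
      Relation.Map Adj part part (part x) (part y) ∧ cycAdj n (σ (layer x)) (σ (layer y)) := by
  have : NeZero n := ⟨by omega⟩
  rcases isEmpty_or_nonempty V with hV | ⟨⟨x₀⟩⟩
  · exact ⟨Equiv.refl _, fun x => isEmptyElim x⟩
  obtain ⟨y₀, hxy₀⟩ : ∃ y, Adj x₀ y := by
    obtain ⟨x₁, hx₁⟩ := hbij.surjective (part x₀, layer x₀ + 1)
    refine ((hconn x₀ x₁).cases_head.resolve_left ?_).imp fun _ h => h.1
    rintro rfl
    have h : (1 : ZMod n) = 0 := by simpa using congrArg Prod.snd hx₁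
    rw [ZMod.one_eq_zero_iff] at h
    omega
  have hdeg x (hx : part x = part x₀) : {y | part y = part y₀ ∧ Adj x y}.ncard = 2 := by
    obtain ⟨d, hd, hdx⟩ := hc (part x₀) (part y₀)
    have hpos : 0 < {y | part y = part y₀ ∧ Adj x₀ y}.ncard :=
      (Set.ncard_pos).mpr ⟨y₀, rfl, hxy₀⟩
    obtain rfl : d = 2 := hd.resolve_left fun h0 => hpos.ne' ((hdx x₀ rfl).trans h0)
    exact hdx x hx
  set S := quotientGraph Adj hsymm layer hind
  have h2 i : (S.neighborSet i).ncard = 2 := by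
    obtain ⟨x, hx⟩ := hbij.surjective (part x₀, i)
    obtain ⟨hpart, rfl⟩ := Prod.ext_iff.mp hx
    rw [show S.neighborSet (layer x) = {j | Relation.Map Adj layer layer (layer x) j} from rfl,
      ncard_setOf_map_layer hbij.injective hb ⟨x₀, y₀, hxy₀, hpart.symm, rfl⟩]
    exact hdeg x hpart
  have hsurj : Surjective layer := fun i =>
    (hbij.surjective (part x₀, i)).imp fun _ h => congrArg Prod.snd h
  obtain ⟨σ, hσ⟩ := SimpleGraph.Connected.exists_equiv_cycAdj (by omega) (ZMod.card n)
    ⟨quotientGraph_preconnected hsymm hind hconn hsurj⟩ h2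
  refine ⟨σ, fun x y => ?_⟩
  rw [adj_iff_map_part_and_map_layer hbij.injective hb, ← hσ]
  exact Iff.rfl

/-- If a connected graph `Γ` admits a partition `{L₁, …, Lₙ}` into
independent sets and a partition `𝒫` satisfying conditions (a), (b), (c), then
`Γ ≅ Δ × Cₙ` for some graph `Δ`. -/
theorem stmt_17 {V : Type} [Fintype V]
    (Adj : V → V → Prop) (hsymm : Symmetric Adj)
    (hconn : ∀ u v : V, Relation.ReflTransGen Adj u v)
    (n : ℕ) (hn : 3 ≤ n)
    (L : ZMod n → Set V)
    (hLdisj : Pairwise fun i j => Disjoint (L i) (L j))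
    (hLcover : (⋃ i, L i) = Set.univ)
    (hLind : ∀ i, ∀ x ∈ L i, ∀ y ∈ L i, ¬Adj x y)
    (P : Set (Set V)) (hP : Setoid.IsPartition P)
    (ha : ∀ p ∈ P, ∀ i, ∃! x, x ∈ p ∩ L i)
    (hb : ∀ p ∈ P, ∀ p' ∈ P, ∀ i j : ZMod n,
      (∃ x ∈ p, ∃ y ∈ p', Adj x y) → (∃ x ∈ L i, ∃ y ∈ L j, Adj x y) →
      ∃ x ∈ p ∩ L i, ∃ y ∈ p' ∩ L j, Adj x y)
    (hc : ∀ p ∈ P, ∀ p' ∈ P, ∃ d : ℕ, (d = 0 ∨ d = 2) ∧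
      ∀ x ∈ p, Set.ncard {y ∈ p' | Adj x y} = d) :
    ∃ (VD : Type) (DAdj : VD → VD → Prop), Symmetric DAdj ∧
      ∃ e : V ≃ VD × ZMod n,
        ∀ x y, Adj x y ↔ (DAdj (e x).1 (e y).1 ∧ cycAdj n (e x).2 (e y).2) := by
  obtain ⟨layer, hlayer⟩ := exists_forall_mem_iff_eq hLdisj hLcover
  obtain ⟨part, hpart⟩ : ∃ part : V → P, ∀ x (p : P), x ∈ (p : Set V) ↔ part x = p :=
    exists_forall_mem_iff_eq
      (fun p q hpq => hP.pairwiseDisjoint p.2 q.2 (Subtype.coe_ne_coe.mpr hpq))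
      (by rw [← Set.sUnion_eq_iUnion, hP.sUnion_eq_univ])
  have hbij : Bijective fun x => (part x, layer x) := by
    refine (bijective_iff_existsUnique _).mpr fun ⟨p, i⟩ => ?_
    simpa only [Prod.ext_iff, Set.mem_inter_iff, hpart, hlayer] using ha p p.2 i
  have hmem x : x ∈ (part x : Set V) := (hpart x _).mpr rfl
  have hmemL x : x ∈ L (layer x) := (hlayer x _).mpr rfl
  obtain ⟨σ, hσ⟩ := exists_equiv_adj_iff_map_part_and_cycAdj hsymm hconn (by omega) hbij
    (fun x y h hxy => hLind _ x (hmemL x) y (hxy ▸ hmemL y) h)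
    (fun x y x' y' h h' => by
      obtain ⟨u, ⟨hu, hu'⟩, w, ⟨hw, hw'⟩, huw⟩ := hb _ (part x).2 _ (part y).2 (layer x')
        (layer y') ⟨x, hmem x, y, hmem y, h⟩ ⟨x', hmemL x', y', hmemL y', h'⟩
      exact ⟨u, w, (hpart u _).mp hu, (hlayer u _).mp hu', (hpart w _).mp hw,
        (hlayer w _).mp hw', huw⟩)
    (fun p q => by simpa only [hpart] using hc p p.2 q q.2)
  exact ⟨P, Relation.Map Adj part part, fun _ _ ⟨x, y, h, hx, hy⟩ => ⟨y, x, hsymm h, hy, hx⟩,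
    (Equiv.ofBijective _ hbij).trans ((Equiv.refl _).prodCongr σ), hσ⟩
end

section
/- A nonempty graph Γ is isomorphic to a direct product Δ × Σ of two graphs if and only if V(Γ) admits partitions 𝒫 and ℒ such that: (a) |P ∩ L| = 1 for all P ∈ 𝒫 and L ∈ ℒ; and (b) for P_u, P_v ∈ 𝒫 and L_i, L_j ∈ ℒ, if there exist edges of Γ from P_u to P_v and from L_i to L_j, then there exists an edge of Γ from P_u ∩ L_i to P_v ∩ L_j. -/
/-!
Two partitions whose blocks pairwise meet in exactly one point form a grid: sending `x` to the
pair of blocks containing it is a bijection `V ≃ 𝒫 × ℒ`, whose inverse sends `(P, L)` to the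
point of `P ∩ L`. Under this bijection, adjacency in `Γ` becomes adjacency in `Δ × Σ` precisely
by condition (b); conversely the fibres of the two projections of `Δ × Σ` form such a grid.
-/

section EdgeBetween

variable {V : Type*} (Adj : V → V → Prop)

def HasEdgeBetween (s t : Set V) : Prop := ∃ x ∈ s, ∃ y ∈ t, Adj x y

variable {Adj}

theorem HasEdgeBetween.symm (hsymm : Symmetric Adj) {s t : Set V} :
    HasEdgeBetween Adj s t → HasEdgeBetween Adj t s :=
  fun ⟨x, hx, y, hy, hxy⟩ => ⟨y, hy, x, hx, hsymm hxy⟩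

end EdgeBetween

section ProductToPartitions

variable {V A B : Type*} {Adj : V → V → Prop} {AdjA : A → A → Prop} {AdjB : B → B → Prop}

theorem existsUnique_mem_inter_classes_ker (e : V ≃ A × B) :
    ∀ p ∈ (Setoid.ker fun x => (e x).1).classes, ∀ l ∈ (Setoid.ker fun x => (e x).2).classes,
      ∃! x, x ∈ p ∩ l := by
  rintro _ ⟨u, rfl⟩ _ ⟨v, rfl⟩
  refine ⟨e.symm ((e u).1, (e v).2), by simp [Setoid.ker_def], fun x ⟨hxu, hxv⟩ => ?_⟩
  exact e.eq_symm_apply.mpr (Prod.ext hxu hxv)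

theorem hasEdgeBetween_inter_classes_ker (e : V ≃ A × B)
    (he : ∀ x y, Adj x y ↔ (AdjA (e x).1 (e y).1 ∧ AdjB (e x).2 (e y).2)) :
    ∀ p ∈ (Setoid.ker fun x => (e x).1).classes, ∀ p' ∈ (Setoid.ker fun x => (e x).1).classes,
      ∀ l ∈ (Setoid.ker fun x => (e x).2).classes, ∀ l' ∈ (Setoid.ker fun x => (e x).2).classes,
      HasEdgeBetween Adj p p' → HasEdgeBetween Adj l l' →
        HasEdgeBetween Adj (p ∩ l) (p' ∩ l') := by
  rintro _ ⟨u, rfl⟩ _ ⟨u', rfl⟩ _ ⟨v, rfl⟩ _ ⟨v', rfl⟩ ⟨x, hx, y, hy, hxy⟩ ⟨z, hz, w, hw, hzw⟩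
  simp only [Set.mem_ofPred_eq, Setoid.ker_def] at hx hy hz hw
  have hA : AdjA (e u).1 (e u').1 := hx ▸ hy ▸ ((he x y).mp hxy).1
  have hB : AdjB (e v).2 (e v').2 := hz ▸ hw ▸ ((he z w).mp hzw).2
  refine ⟨e.symm ((e u).1, (e v).2), by simp [Setoid.ker_def],
    e.symm ((e u').1, (e v').2), by simp [Setoid.ker_def], ?_⟩
  simpa [he] using ⟨hA, hB⟩

theorem exists_partitions_of_equiv_prod (e : V ≃ A × B)
    (he : ∀ x y, Adj x y ↔ (AdjA (e x).1 (e y).1 ∧ AdjB (e x).2 (e y).2)) :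
    ∃ P L : Set (Set V), Setoid.IsPartition P ∧ Setoid.IsPartition L ∧
      (∀ p ∈ P, ∀ l ∈ L, ∃! x, x ∈ p ∩ l) ∧
      (∀ p ∈ P, ∀ p' ∈ P, ∀ l ∈ L, ∀ l' ∈ L,
        HasEdgeBetween Adj p p' → HasEdgeBetween Adj l l' →
          HasEdgeBetween Adj (p ∩ l) (p' ∩ l')) :=
  ⟨_, _, Setoid.isPartition_classes _, Setoid.isPartition_classes _,
    existsUnique_mem_inter_classes_ker e, hasEdgeBetween_inter_classes_ker e he⟩

end ProductToPartitions

section PartitionsToProduct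

variable {V : Type*} {P L : Set (Set V)} (hPL : ∀ p ∈ P, ∀ l ∈ L, ∃! x, x ∈ p ∩ l)

noncomputable def gridPoint (q : P × L) : V := (hPL q.1 q.1.2 q.2 q.2.2).exists.choose

theorem gridPoint_mem (q : P × L) : gridPoint hPL q ∈ q.1.1 ∩ q.2.1 :=
  (hPL q.1 q.1.2 q.2 q.2.2).exists.choose_spec

theorem eq_gridPoint {q : P × L} {x : V} (hx : x ∈ q.1.1 ∩ q.2.1) : x = gridPoint hPL q :=
  (hPL q.1 q.1.2 q.2 q.2.2).unique hx (gridPoint_mem hPL q)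

theorem gridPoint_bijective (hP : Setoid.IsPartition P) (hL : Setoid.IsPartition L) :
    Function.Bijective (gridPoint hPL) := by
  constructor
  · intro q q' h
    have hq := gridPoint_mem hPL q
    have hq' := gridPoint_mem hPL q'
    rw [← h] at hq'
    exact Prod.ext (Subtype.ext (Setoid.eq_of_mem_eqv_class hP.2 q.1.2 hq.1 q'.1.2 hq'.1))
      (Subtype.ext (Setoid.eq_of_mem_eqv_class hL.2 q.2.2 hq.2 q'.2.2 hq'.2))
  · intro x
    obtain ⟨p, ⟨hp, hxp⟩, -⟩ := hP.2 x
    obtain ⟨l, ⟨hl, hxl⟩, -⟩ := hL.2 x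
    exact ⟨(⟨p, hp⟩, ⟨l, hl⟩), (eq_gridPoint hPL ⟨hxp, hxl⟩).symm⟩

variable {Adj : V → V → Prop}

theorem adj_gridPoint_iff
    (hadj : ∀ p ∈ P, ∀ p' ∈ P, ∀ l ∈ L, ∀ l' ∈ L,
      HasEdgeBetween Adj p p' → HasEdgeBetween Adj l l' → HasEdgeBetween Adj (p ∩ l) (p' ∩ l'))
    (q q' : P × L) :
    Adj (gridPoint hPL q) (gridPoint hPL q') ↔
      HasEdgeBetween Adj q.1 q'.1 ∧ HasEdgeBetween Adj q.2 q'.2 := by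
  obtain ⟨hp, hl⟩ := gridPoint_mem hPL q
  obtain ⟨hp', hl'⟩ := gridPoint_mem hPL q'
  refine ⟨fun h => ⟨⟨_, hp, _, hp', h⟩, ⟨_, hl, _, hl', h⟩⟩, fun ⟨hpp', hll'⟩ => ?_⟩
  obtain ⟨x, hx, y, hy, hxy⟩ := hadj _ q.1.2 _ q'.1.2 _ q.2.2 _ q'.2.2 hpp' hll'
  rwa [eq_gridPoint hPL hx, eq_gridPoint hPL hy] at hxy

theorem exists_equiv_prod_of_partitions (hP : Setoid.IsPartition P) (hL : Setoid.IsPartition L)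
    (hPL : ∀ p ∈ P, ∀ l ∈ L, ∃! x, x ∈ p ∩ l)
    (hadj : ∀ p ∈ P, ∀ p' ∈ P, ∀ l ∈ L, ∀ l' ∈ L,
      HasEdgeBetween Adj p p' → HasEdgeBetween Adj l l' → HasEdgeBetween Adj (p ∩ l) (p' ∩ l')) :
    ∃ e : V ≃ P × L, ∀ x y, Adj x y ↔
      (HasEdgeBetween Adj (e x).1 (e y).1 ∧ HasEdgeBetween Adj (e x).2 (e y).2) := by
  have hbij := gridPoint_bijective hPL hP hL
  refine ⟨(Equiv.ofBijective _ hbij).symm, fun x y => ?_⟩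
  obtain ⟨q, rfl⟩ := hbij.2 x
  obtain ⟨q', rfl⟩ := hbij.2 y
  simpa using adj_gridPoint_iff hPL hadj q q'

end PartitionsToProduct

theorem stmt_18_general {V : Type}
    (Adj : V → V → Prop) (hsymm : Symmetric Adj) :
    (∃ (A B : Type) (AdjA : A → A → Prop) (AdjB : B → B → Prop),
      Symmetric AdjA ∧ Symmetric AdjB ∧
      ∃ e : V ≃ A × B,
        ∀ x y, Adj x y ↔ (AdjA (e x).1 (e y).1 ∧ AdjB (e x).2 (e y).2)) ↔
    (∃ P L : Set (Set V), Setoid.IsPartition P ∧ Setoid.IsPartition L ∧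
      (∀ p ∈ P, ∀ l ∈ L, ∃! x, x ∈ p ∩ l) ∧
      (∀ p ∈ P, ∀ p' ∈ P, ∀ l ∈ L, ∀ l' ∈ L,
        (∃ x ∈ p, ∃ y ∈ p', Adj x y) → (∃ x ∈ l, ∃ y ∈ l', Adj x y) →
        ∃ x ∈ p ∩ l, ∃ y ∈ p' ∩ l', Adj x y)) := by
  refine ⟨fun ⟨A, B, AdjA, AdjB, _, _, e, he⟩ => exists_partitions_of_equiv_prod e he,
    fun ⟨P, L, hP, hL, hPL, hadj⟩ => ?_⟩
  obtain ⟨e, he⟩ := exists_equiv_prod_of_partitions hP hL hPL hadj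
  exact ⟨P, L, fun p q => HasEdgeBetween Adj p q, fun l m => HasEdgeBetween Adj l m,
    fun _ _ => HasEdgeBetween.symm hsymm, fun _ _ => HasEdgeBetween.symm hsymm, e, he⟩

/-- A nonempty graph `Γ` is isomorphic to a direct product `Δ × Σ`
iff `V(Γ)` admits partitions `𝒫` and `ℒ` satisfying conditions (a) and (b). -/
theorem stmt_18 {V : Type} [Fintype V] [Nonempty V]
    (Adj : V → V → Prop) (hsymm : Symmetric Adj) :
    (∃ (A B : Type) (AdjA : A → A → Prop) (AdjB : B → B → Prop),
      Symmetric AdjA ∧ Symmetric AdjB ∧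
      ∃ e : V ≃ A × B,
        ∀ x y, Adj x y ↔ (AdjA (e x).1 (e y).1 ∧ AdjB (e x).2 (e y).2)) ↔
    (∃ P L : Set (Set V), Setoid.IsPartition P ∧ Setoid.IsPartition L ∧
      (∀ p ∈ P, ∀ l ∈ L, ∃! x, x ∈ p ∩ l) ∧
      (∀ p ∈ P, ∀ p' ∈ P, ∀ l ∈ L, ∀ l' ∈ L,
        (∃ x ∈ p, ∃ y ∈ p', Adj x y) → (∃ x ∈ l, ∃ y ∈ l', Adj x y) →
        ∃ x ∈ p ∩ l, ∃ y ∈ p' ∩ l', Adj x y)) :=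
  stmt_18_general Adj hsymm
end

section
/- Let Γ be a connected, non-bipartite, twin-free graph and Σ be a connected, twin-free, bipartite graph with bipartition {U,W}. Then every automorphism of S(Γ) □ S(Σ) either stabilizes V(Γ) × U setwise or maps V(Γ) × U onto V(Γ) × W; and there exists σ ∈ Aut(S(Σ)) with σ² = id such that composing with (id, σ) yields an automorphism stabilizing V(Γ) × U, where moreover σ interchanges U and W if σ ≠ id. -/
/-- The neighborhood of a vertex. -/
def nbhd {X : Type*} (A : X → X → Prop) (u : X) : Set X := {x | A u x}

/-- Adjacency of the graph `B(Γ)`: distinct vertices with a common neighbor. -/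
def bAdj {X : Type*} (A : X → X → Prop) : X → X → Prop :=
  fun u v => u ≠ v ∧ ∃ w, A u w ∧ A v w

/-- An edge `{u, v}` of `B(Γ)` is dispensable with respect to `Γ`. -/
def dispensable {X : Type*} (A : X → X → Prop) (u v : X) : Prop :=
  ∃ w, ((nbhd A u ∩ nbhd A v ⊂ nbhd A u ∩ nbhd A w) ∨
        (nbhd A u ⊂ nbhd A w ∧ nbhd A w ⊂ nbhd A v)) ∧
       ((nbhd A v ∩ nbhd A u ⊂ nbhd A v ∩ nbhd A w) ∨
        (nbhd A v ⊂ nbhd A w ∧ nbhd A w ⊂ nbhd A u))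

/-- Adjacency of the Cartesian skeleton `S(Γ)`: edges of `B(Γ)` that are not
dispensable with respect to `Γ`. -/
def sAdj {X : Type*} (A : X → X → Prop) : X → X → Prop :=
  fun u v => bAdj A u v ∧ ¬dispensable A u v

/-- Adjacency of the Cartesian product of two graphs. -/
def boxAdj {X Y : Type*} (A : X → X → Prop) (B : Y → Y → Prop) :
    X × Y → X × Y → Prop :=
  fun p q => (p.1 = q.1 ∧ B p.2 q.2) ∨ (p.2 = q.2 ∧ A p.1 q.1)

/-!
`S(Γ)` is connected: a dispensable edge `uv` of `B(Γ)` with witness `w` splits into the edges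
`uw`, `wv` of `B(Γ)`, each lexicographically smaller (larger common neighbourhood, or the same
common neighbourhood and a smaller union), so by well-founded induction every edge of `B(Γ)` is
joined by a path of `S(Γ)`; and `B(Γ)` is connected when `Γ` is connected and not bipartite.
For bipartite `Σ` the same argument shows that `U` and `W` are the two components of `S(Σ)`.

An automorphism `τ` of `S(Γ) □ S(Σ)` permutes the components `V(Γ) × U` and `V(Γ) × W`. If it
swaps them, it restricts to an isomorphism `S(Γ) □ S(Σ)[U] ≅ S(Γ) □ S(Σ)[W]`, and cancelling the
finite connected factor `S(Γ)` gives `f : S(Σ)[U] ≅ S(Σ)[W]`; then `σ = f ∪ f⁻¹` works.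

The cancellation `G □ H ≅ G □ K → H ≅ K` for finite connected `G` goes by induction on `|V(G)|`
through the refinement property of Cartesian products of connected graphs: an isomorphism maps
layers to geodesically convex sets, and a convex subset of a product is the product of its two
slices.
-/

section Skeleton

open Relation

variable {X : Type*} {A : X → X → Prop}

def HasCommonNbr (A : X → X → Prop) (u v : X) : Prop := ∃ w, A u w ∧ A v w

/-- One of the two symmetric halves of `dispensable A u v`, for a fixed witness `w`. -/
def DispensableVia (A : X → X → Prop) (u v w : X) : Prop :=
  nbhd A u ∩ nbhd A v ⊂ nbhd A u ∩ nbhd A w ∨ nbhd A u ⊂ nbhd A w ∧ nbhd A w ⊂ nbhd A v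

theorem hasCommonNbr_comm {u v : X} : HasCommonNbr A u v ↔ HasCommonNbr A v u :=
  exists_congr fun _ => and_comm

theorem sAdj_symm {u v : X} : sAdj A u v → sAdj A v u :=
  fun ⟨⟨hne, w, hu, hv⟩, hd⟩ => ⟨⟨hne.symm, w, hv, hu⟩, fun ⟨w, h₁, h₂⟩ => hd ⟨w, h₂, h₁⟩⟩

noncomputable def splitKey [Finite X] (A : X → X → Prop) (u v : X) : Lex (ℕ × ℕ) :=
  toLex (Nat.card X - (nbhd A u ∩ nbhd A v).ncard, (nbhd A u ∪ nbhd A v).ncard)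

theorem splitKey_comm [Finite X] (u v : X) : splitKey A u v = splitKey A v u := by
  rw [splitKey, splitKey, Set.inter_comm, Set.union_comm]

theorem DispensableVia.splitKey_lt [Finite X] {u v w : X} (h : DispensableVia A u v w) :
    splitKey A u w < splitKey A u v := by
  rw [splitKey, splitKey, Prod.Lex.toLex_lt_toLex]
  rcases h with h | ⟨huw, hwv⟩
  · have := Set.ncard_lt_ncard h
    have := Set.ncard_le_card (nbhd A u ∩ nbhd A w)
    left
    simp only
    omega
  · right
    rw [Set.inter_eq_left.mpr huw.subset, Set.inter_eq_left.mpr (huw.subset.trans hwv.subset),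
      Set.union_eq_right.mpr huw.subset, Set.union_eq_right.mpr (huw.subset.trans hwv.subset)]
    exact ⟨rfl, Set.ncard_lt_ncard hwv⟩

theorem DispensableVia.ne_and_hasCommonNbr {u v w : X} (h : DispensableVia A u v w)
    (hc : HasCommonNbr A u v) : w ≠ v ∧ HasCommonNbr A u w := by
  obtain ⟨t, hut, hvt⟩ := hc
  rcases h with h | ⟨huw, hwv⟩
  · refine ⟨?_, t, hut, (h.subset ⟨hut, hvt⟩).2⟩
    rintro rfl
    exact h.ne rfl
  · exact ⟨by rintro rfl; exact hwv.ne rfl, t, hut, huw.subset hut⟩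

theorem reflTransGen_sAdj_of_bAdj [Finite X] {u v : X} (h : bAdj A u v) :
    ReflTransGen (sAdj A) u v := by
  by_cases hd : dispensable A u v
  · obtain ⟨w, huv, hvu⟩ := hd
    obtain ⟨hwv, huw⟩ := DispensableVia.ne_and_hasCommonNbr huv h.2
    obtain ⟨hwu, hvw⟩ := DispensableVia.ne_and_hasCommonNbr hvu (hasCommonNbr_comm.mp h.2)
    have : splitKey A u w < splitKey A u v := DispensableVia.splitKey_lt huv
    have : splitKey A w v < splitKey A u v := by
      simpa only [splitKey_comm v] using DispensableVia.splitKey_lt hvu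
    exact (reflTransGen_sAdj_of_bAdj ⟨hwu.symm, huw⟩).trans
      (reflTransGen_sAdj_of_bAdj ⟨hwv, hasCommonNbr_comm.mp hvw⟩)
  · exact .single ⟨h, hd⟩
termination_by splitKey A u v
decreasing_by all_goals assumption

theorem reflTransGen_sAdj_of_reflTransGen_hasCommonNbr [Finite X] {u v : X}
    (h : ReflTransGen (HasCommonNbr A) u v) : ReflTransGen (sAdj A) u v := by
  induction h with
  | refl => rfl
  | @tail y z _ hyz ih =>
    by_cases hne : y = z
    · exact hne ▸ ih
    · exact ih.trans (reflTransGen_sAdj_of_bAdj ⟨hne, hyz⟩)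

theorem reflTransGen_hasCommonNbr_or_adj (hs : ∀ ⦃x y⦄, A x y → A y x) {u x : X}
    (h : ReflTransGen A u x) :
    ReflTransGen (HasCommonNbr A) u x ∨ ∃ p, ReflTransGen (HasCommonNbr A) u p ∧ A p x := by
  induction h with
  | refl => exact .inl .refl
  | tail _ hyx ih =>
    rcases ih with hy | ⟨p, hp, hpy⟩
    · exact .inr ⟨_, hy, hyx⟩
    · exact .inl (hp.tail ⟨_, hpy, hs hyx⟩)

theorem reflTransGen_hasCommonNbr_of_not_bipartite (hs : ∀ ⦃x y⦄, A x y → A y x)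
    (hconn : ∀ u v, ReflTransGen A u v) (hnb : ¬∃ c : X → Bool, ∀ u v, A u v → c u ≠ c v)
    (u v : X) : ReflTransGen (HasCommonNbr A) u v := by
  classical
  by_contra hv
  refine hnb ⟨fun x => decide (ReflTransGen (HasCommonNbr A) u x), fun a b hab hiff => ?_⟩
  simp only [decide_eq_decide] at hiff
  by_cases ha : ReflTransGen (HasCommonNbr A) u a
  · -- the class of `u` contains the edge `ab`, hence is closed under adjacency
    have hb := hiff.mp ha
    have closed : ∀ x, ReflTransGen A a x →
        ReflTransGen (HasCommonNbr A) u x ∧ ∀ s, A x s → ReflTransGen (HasCommonNbr A) u s := by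
      intro x hx
      induction hx with
      | refl => exact ⟨ha, fun s has => hb.tail ⟨a, hs hab, hs has⟩⟩
      | tail _ hyx ih => exact ⟨ih.2 _ hyx, fun s hxs => ih.1.tail ⟨_, hyx, hs hxs⟩⟩
    exact hv (closed v (hconn a v)).1
  · obtain hu | ⟨p, hp, hpa⟩ := reflTransGen_hasCommonNbr_or_adj hs (hconn u a)
    · exact ha hu
    · exact hiff.not.mp ha (hp.tail ⟨a, hpa, hs hab⟩)

theorem mem_iff_of_reflTransGen_hasCommonNbr {U : Set X}
    (hbip : ∀ u v, A u v → (u ∈ U ↔ v ∉ U)) {u v : X} (h : ReflTransGen (HasCommonNbr A) u v) :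
    u ∈ U ↔ v ∈ U := by
  induction h with
  | refl => rfl
  | tail _ hyz ih =>
    obtain ⟨t, hyt, hzt⟩ := hyz
    exact ih.trans ((hbip _ t hyt).trans (hbip _ t hzt).symm)

theorem reflTransGen_hasCommonNbr_of_mem {U : Set X} (hbip : ∀ u v, A u v → (u ∈ U ↔ v ∉ U))
    (hs : ∀ ⦃x y⦄, A x y → A y x) (hconn : ∀ u v, ReflTransGen A u v) {u v : X} (hu : u ∈ U)
    (hv : v ∈ U) : ReflTransGen (HasCommonNbr A) u v := by
  obtain h | ⟨p, hp, hpv⟩ := reflTransGen_hasCommonNbr_or_adj hs (hconn u v)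
  · exact h
  · exact absurd hv ((hbip p v hpv).mp ((mem_iff_of_reflTransGen_hasCommonNbr hbip hp).mp hu))

end Skeleton

namespace SimpleGraph

variable {V α β γ δ : Type*}

section Skeleton

open Relation

variable {X : Type*}

def cartesianSkeleton (A : X → X → Prop) : SimpleGraph X where
  Adj := sAdj A
  symm := ⟨fun _ _ => sAdj_symm⟩
  loopless := ⟨fun _ h => h.1.1 rfl⟩

variable {A : X → X → Prop} [Finite X]

theorem cartesianSkeleton_preconnected (hs : ∀ ⦃x y⦄, A x y → A y x)
    (hconn : ∀ u v, ReflTransGen A u v) (hnb : ¬∃ c : X → Bool, ∀ u v, A u v → c u ≠ c v) :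
    (cartesianSkeleton A).Preconnected := fun u v =>
  (reachable_iff_reflTransGen u v).mpr <| reflTransGen_sAdj_of_reflTransGen_hasCommonNbr <|
    reflTransGen_hasCommonNbr_of_not_bipartite hs hconn hnb u v

theorem cartesianSkeleton_reachable_iff (hs : ∀ ⦃x y⦄, A x y → A y x)
    (hconn : ∀ u v, ReflTransGen A u v) {U : Set X} (hbip : ∀ u v, A u v → (u ∈ U ↔ v ∉ U))
    (u v : X) : (cartesianSkeleton A).Reachable u v ↔ (u ∈ U ↔ v ∈ U) := by
  rw [reachable_iff_reflTransGen]
  refine ⟨fun h => ?_, fun h => reflTransGen_sAdj_of_reflTransGen_hasCommonNbr ?_⟩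
  · induction h with
    | refl => rfl
    | tail _ hyz ih =>
      exact ih.trans (mem_iff_of_reflTransGen_hasCommonNbr hbip (.single hyz.1.2))
  · by_cases hu : u ∈ U
    · exact reflTransGen_hasCommonNbr_of_mem hbip hs hconn hu (h.mp hu)
    · have hbip' : ∀ u v, A u v → (u ∈ Uᶜ ↔ v ∉ Uᶜ) := fun u v huv => by
        simpa only [Set.mem_compl_iff, not_not, not_iff_comm] using (hbip u v huv).symm
      exact reflTransGen_hasCommonNbr_of_mem hbip' hs hconn hu (h.not.mp hu)

end Skeleton

section Iso

variable {G : SimpleGraph α}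

def Iso.boxProd {G' : SimpleGraph γ} {H : SimpleGraph β} {H' : SimpleGraph δ} (e : G ≃g G')
    (f : H ≃g H') : (G □ H) ≃g (G' □ H') where
  toEquiv := e.toEquiv.prodCongr f.toEquiv
  map_rel_iff' := by simp [boxProd_adj, Iso.map_adj_iff]

def induceCongr {s t : Set α} (h : s = t) : G.induce s ≃g G.induce t :=
  Iso.refl.induce (h ▸ Set.bijOn_id s)

theorem Iso.dist_eq {H : SimpleGraph β} (e : G ≃g H) (u v : α) :
    H.dist (e u) (e v) = G.dist u v := by
  by_cases h : G.Reachable u v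
  · obtain ⟨p, hp⟩ := h.exists_walk_length_eq_dist
    obtain ⟨q, hq⟩ := (Iso.reachable_iff (φ := e)).mpr h |>.exists_walk_length_eq_dist
    have h₁ : H.dist (e u) (e v) ≤ p.length := by simpa using dist_le (p.map e.toHom)
    have h₂ : G.dist u v ≤ q.length := by simpa using dist_le (q.map e.symm.toHom)
    omega
  · rw [dist_eq_zero_of_not_reachable h,
      dist_eq_zero_of_not_reachable (mt Iso.reachable_iff.mp h)]

end Iso

/-- Geodesic convexity. Since `dist` is `0` between unreachable vertices, this is only
meaningful for connected graphs. -/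
def IsConvex (G : SimpleGraph α) (T : Set α) : Prop :=
  ∀ ⦃x y z⦄, x ∈ T → z ∈ T → G.dist x y + G.dist y z = G.dist x z → y ∈ T

section Convex

variable {G : SimpleGraph α} {H : SimpleGraph β}

theorem IsConvex.preimage_iso {K : SimpleGraph γ} {T : Set γ} (e : G ≃g K)
    (hT : K.IsConvex T) : G.IsConvex (e ⁻¹' T) := fun _ _ _ hx hz hd =>
  hT hx hz (by simpa only [e.dist_eq] using hd)

theorem dist_boxProd (hG : G.Preconnected) (hH : H.Preconnected) (x y : α × β) :
    (G □ H).dist x y = G.dist x.1 y.1 + H.dist x.2 y.2 := by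
  have hr : (G □ H).Reachable x y := reachable_boxProd.mpr ⟨hG _ _, hH _ _⟩
  have := edist_boxProd (G := G) (H := H) x y
  rw [← hr.coe_dist_eq_edist, ← (hG x.1 y.1).coe_dist_eq_edist,
    ← (hH x.2 y.2).coe_dist_eq_edist] at this
  exact_mod_cast this

theorem isConvex_boxProd_layer (hG : G.Preconnected) (hH : H.Preconnected) (b : β) :
    (G □ H).IsConvex {p | p.2 = b} := by
  intro x y z hx hz hd
  simp only [Set.mem_ofPred_eq] at hx hz ⊢
  rw [dist_boxProd hG hH, dist_boxProd hG hH, dist_boxProd hG hH, hx, hz, dist_self,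
    add_zero] at hd
  have := (hG x.1 y.1).dist_triangle_left z.1
  have : H.dist b y.2 = 0 := by omega
  exact ((hH b y.2).dist_eq_zero_iff.mp this).symm

theorem IsConvex.mk_fst_snd_mem (hG : G.Preconnected) (hH : H.Preconnected)
    {T : Set (α × β)} (hT : (G □ H).IsConvex T) {p q : α × β} (hp : p ∈ T) (hq : q ∈ T) :
    (p.1, q.2) ∈ T :=
  hT hp hq (by simp only [dist_boxProd hG hH, dist_self]; omega)

theorem IsConvex.eq_prod (hG : G.Preconnected) (hH : H.Preconnected) {T : Set (α × β)}
    (hT : (G □ H).IsConvex T) {p : α × β} (hp : p ∈ T) :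
    T = {a | (a, p.2) ∈ T} ×ˢ {b | (p.1, b) ∈ T} := by
  ext q
  refine ⟨fun hq => ⟨hT.mk_fst_snd_mem hG hH hq hp, hT.mk_fst_snd_mem hG hH hp hq⟩,
    fun ⟨h₁, h₂⟩ => ?_⟩
  simpa using hT.mk_fst_snd_mem hG hH h₁ h₂

end Convex

section Induce

variable {G : SimpleGraph α} {H : SimpleGraph β}

def boxProdLayerIso (b : β) : G ≃g (G □ H).induce {p | p.2 = b} where
  toFun a := ⟨(a, b), rfl⟩
  invFun p := p.1.1
  left_inv _ := rfl
  right_inv := by rintro ⟨⟨a, _⟩, rfl⟩; rfl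
  map_rel_iff' := by simp [boxProd_adj]

def boxProdSliceIso (T : Set (α × β)) (b : β) :
    G.induce {a | (a, b) ∈ T} ≃g (G □ H).induce {p | p ∈ T ∧ p.2 = b} where
  toFun a := ⟨(a.1, b), a.2, rfl⟩
  invFun p := ⟨p.1.1, by obtain ⟨⟨a, _⟩, h, rfl⟩ := p; exact h⟩
  left_inv _ := rfl
  right_inv := by rintro ⟨⟨a, _⟩, _, rfl⟩; rfl
  map_rel_iff' := by simp [boxProd_adj]

def boxProdInduceProdIso (s : Set α) (t : Set β) :
    (G □ H).induce (s ×ˢ t) ≃g (G.induce s □ H.induce t) where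
  toFun p := (⟨p.1.1, p.2.1⟩, ⟨p.1.2, p.2.2⟩)
  invFun q := ⟨(q.1, q.2), q.1.2, q.2.2⟩
  left_inv _ := rfl
  right_inv _ := rfl
  map_rel_iff' := by simp [boxProd_adj, Subtype.ext_iff]

def boxProdInduceSndIso (t : Set β) :
    (G □ H).induce {p | p.2 ∈ t} ≃g (G □ H.induce t) where
  toFun p := (p.1.1, ⟨p.1.2, p.2⟩)
  invFun q := ⟨(q.1, q.2), q.2.2⟩
  left_inv _ := rfl
  right_inv _ := rfl
  map_rel_iff' := by simp [boxProd_adj, Subtype.ext_iff]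

end Induce

section Refinement

variable {A : SimpleGraph α} {B : SimpleGraph β} {C : SimpleGraph γ} {D : SimpleGraph δ}

theorem Iso.nonempty_iso_induce_boxProd (φ : (A □ B) ≃g (C □ D)) (hA : A.Preconnected)
    (hB : B.Preconnected) (hC : C.Preconnected) (hD : D.Preconnected) {p : α × β}
    {q : γ × δ} (hpq : φ p = q) :
    Nonempty (A ≃g (C.induce {c | (φ.symm (c, q.2)).2 = p.2} □
      D.induce {d | (φ.symm (q.1, d)).2 = p.2})) := by
  let T : Set (γ × δ) := φ.symm ⁻¹' {x | x.2 = p.2}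
  have hT : (C □ D).IsConvex T := (isConvex_boxProd_layer hA hB p.2).preimage_iso φ.symm
  have hq : q ∈ T := by simp [T, ← hpq]
  have hφT : Set.BijOn φ {x | x.2 = p.2} T :=
    Equiv.bijOn' φ.toEquiv (fun x hx => by simpa [T] using hx) (fun _ hy => hy)
  exact ⟨(boxProdLayerIso p.2).trans <| (φ.induce hφT).trans <|
    (induceCongr (hT.eq_prod hC hD hq)).trans (boxProdInduceProdIso _ _)⟩

theorem Iso.nonempty_iso_induce_induce (φ : (A □ B) ≃g (C □ D)) {p : α × β} {q : γ × δ} :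
    Nonempty (A.induce {a | (φ (a, p.2)).2 = q.2} ≃g
      C.induce {c | (φ.symm (c, q.2)).2 = p.2}) := by
  have hφ : Set.BijOn φ {x | x ∈ φ ⁻¹' {y | y.2 = q.2} ∧ x.2 = p.2}
      {y | y ∈ φ.symm ⁻¹' {x | x.2 = p.2} ∧ y.2 = q.2} :=
    Equiv.bijOn' φ.toEquiv (fun _ ⟨h₁, h₂⟩ => ⟨by simpa using h₂, h₁⟩)
      (fun y ⟨h₁, h₂⟩ => ⟨show (φ (φ.symm y)).2 = q.2 by rwa [φ.apply_symm_apply], h₁⟩)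
  exact ⟨(boxProdSliceIso _ p.2).trans <| (φ.induce hφ).trans (boxProdSliceIso _ q.2).symm⟩

/-- The refinement property `A ≅ A₁ □ A₂`, `B ≅ B₁ □ B₂`, `C ≅ A₁ □ B₁`, `D ≅ A₂ □ B₂`, with
`A₁ = C[P]`, `A₂ = D[Q]`, `B₁ = B[S]`, `B₂ = D[Q']`: these representatives keep `H` and `K` in
the same universe in the induction of `boxProd_left_cancel`. -/
theorem Iso.boxProd_refinement (φ : (A □ B) ≃g (C □ D)) (hA : A.Preconnected)
    (hB : B.Preconnected) (hC : C.Preconnected) (hD : D.Preconnected) (p : α × β) :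
    ∃ (P : Set γ) (Q : Set δ) (S : Set β) (Q' : Set δ),
      Nonempty (A ≃g (C.induce P □ D.induce Q)) ∧ Nonempty (C ≃g (C.induce P □ B.induce S)) ∧
      Nonempty (B ≃g (B.induce S □ D.induce Q')) ∧
      Nonempty (D ≃g (D.induce Q □ D.induce Q')) := by
  obtain ⟨x, y⟩ := p
  set q := φ (x, y) with hq
  have hqx : φ.symm q = (x, y) := by simp [hq]
  let φB : (B □ A) ≃g (C □ D) := (boxProdComm B A).trans φ
  let φD : (A □ B) ≃g (D □ C) := φ.trans (boxProdComm C D)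
  refine ⟨{c | (φ.symm (c, q.2)).2 = y}, {d | (φ.symm (q.1, d)).2 = y},
    {b | (φ (x, b)).2 = q.2}, {d | (φ.symm (q.1, d)).1 = x}, ?_, ?_, ?_, ?_⟩
  · exact φ.nonempty_iso_induce_boxProd hA hB hC hD hq.symm
  · obtain ⟨e⟩ := φ.symm.nonempty_iso_induce_boxProd hC hD hA hB hqx
    obtain ⟨f⟩ := φ.nonempty_iso_induce_induce (p := (x, y)) (q := q)
    exact ⟨e.trans (f.boxProd .refl)⟩
  · obtain ⟨e⟩ := φB.nonempty_iso_induce_boxProd hB hA hC hD (p := (y, x)) hq.symm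
    obtain ⟨f⟩ := φB.nonempty_iso_induce_induce (p := (y, x)) (q := q)
    exact ⟨e.trans (f.symm.boxProd .refl)⟩
  · obtain ⟨e⟩ := φD.symm.nonempty_iso_induce_boxProd hD hC hA hB (p := q.swap) (q := (x, y))
      (by simp [φD, hqx])
    obtain ⟨f₁⟩ := φD.nonempty_iso_induce_induce (p := (x, y)) (q := q.swap)
    obtain ⟨f₂⟩ := Iso.nonempty_iso_induce_induce ((boxProdComm B A).trans φD) (p := (y, x))
      (q := q.swap)
    exact ⟨e.trans (f₁.boxProd f₂)⟩

end Refinement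

theorem nonempty_iso_of_card_eq_one {G : SimpleGraph α} {H : SimpleGraph β}
    (hα : Nat.card α = 1) (hβ : Nat.card β = 1) : Nonempty (G ≃g H) := by
  obtain ⟨_, ⟨a⟩⟩ := Nat.card_eq_one_iff_unique.mp hα
  obtain ⟨_, ⟨b⟩⟩ := Nat.card_eq_one_iff_unique.mp hβ
  exact ⟨⟨equivOfSubsingletonOfSubsingleton (fun _ => b) (fun _ => a),
    fun {x y} => by simp [Subsingleton.elim x y]⟩⟩

universe u v in
theorem boxProd_left_cancel {α : Type u} {β γ : Type v} [Finite α] {G : SimpleGraph α}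
    {H : SimpleGraph β} {K : SimpleGraph γ} (hG : G.Connected) (hH : H.Connected)
    (φ : (G □ H) ≃g (G □ K)) : Nonempty (H ≃g K) := by
  induction hn : Nat.card α using Nat.strong_induction_on generalizing α β γ with
  | _ n ih =>
  have hK : K.Connected := (φ.connected_iff.mp (hG.boxProd hH)).ofBoxProdRight
  obtain ⟨x⟩ := hG.nonempty
  obtain ⟨y⟩ := hH.nonempty
  obtain ⟨P, Q, S, Q', ⟨e₁⟩, ⟨e₂⟩, ⟨e₃⟩, ⟨e₄⟩⟩ :=
    φ.boxProd_refinement hG.preconnected hH.preconnected hG.preconnected hK.preconnected (x, y)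
  have hPQ := e₁.connected_iff.mp hG
  obtain ⟨f⟩ : Nonempty (K.induce Q ≃g H.induce S) := by
    have hnPQ : n = Nat.card P * Nat.card Q := by
      rw [← hn, ← Nat.card_prod]; exact Nat.card_congr e₁.toEquiv
    have hnPS : n = Nat.card P * Nat.card S := by
      rw [← hn, ← Nat.card_prod]; exact Nat.card_congr e₂.toEquiv
    have hle : Nat.card P ≤ n := hn ▸ Finite.card_subtype_le (· ∈ P)
    rcases hle.lt_or_eq with hlt | heq
    · exact ih _ hlt hPQ.ofBoxProdLeft hPQ.ofBoxProdRight (e₁.symm.trans e₂) rfl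
    · have hn₀ : n ≠ 0 := hn ▸ Finite.card_pos_iff.mpr ⟨x⟩ |>.ne'
      rw [heq, eq_comm, mul_eq_left₀ hn₀] at hnPQ hnPS
      exact nonempty_iso_of_card_eq_one hnPQ hnPS
  exact ⟨e₃.trans ((f.symm.boxProd .refl).trans e₄.symm)⟩

section Components

variable {G : SimpleGraph V}

theorem induce_preconnected_of_reachable_iff {s : Set V}
    (h : ∀ u v, G.Reachable u v ↔ (u ∈ s ↔ v ∈ s)) : (G.induce s).Preconnected := by
  classical
  rintro ⟨u, hu⟩ ⟨v, hv⟩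
  obtain ⟨w⟩ := (h u v).mpr (iff_of_true hu hv)
  exact ⟨w.induce s fun x hx => ((h u x).mp ⟨w.takeUntil x hx⟩).mp hu⟩

theorem exists_involutive_iso_swap {s : Set V} (hs : ∀ u v, G.Adj u v → (u ∈ s ↔ v ∈ s))
    (f : G.induce s ≃g G.induce sᶜ) :
    ∃ σ : G ≃g G, Function.Involutive σ ∧ ∀ v, σ v ∈ s ↔ v ∉ s := by
  classical
  let σ : V → V := fun v => if h : v ∈ s then f ⟨v, h⟩ else f.symm ⟨v, h⟩
  have hf : ∀ a, (f a : V) ∉ s := fun a => (f a).2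
  have hf' : ∀ b, (f.symm b : V) ∈ s := fun b => (f.symm b).2
  have hσ : ∀ v, σ v ∈ s ↔ v ∉ s := by
    intro v
    by_cases h : v ∈ s
    · simp [σ, h, hf]
    · simp [σ, h, hf']
  have hinv : Function.Involutive σ := by
    intro v
    by_cases h : v ∈ s
    · simp [σ, h, hf]
    · simp [σ, h, hf']
  refine ⟨⟨hinv.toPerm σ, fun {u v} => ?_⟩, hinv, hσ⟩
  simp only [Function.Involutive.coe_toPerm]
  by_cases huv : u ∈ s ↔ v ∈ s
  · by_cases hu : u ∈ s
    · have hv := huv.mp hu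
      simpa [σ, hu, hv] using f.map_adj_iff (v := ⟨u, hu⟩) (w := ⟨v, hv⟩)
    · have hv := huv.not.mp hu
      simpa [σ, hu, hv] using f.symm.map_adj_iff (v := ⟨u, hu⟩) (w := ⟨v, hv⟩)
  · refine iff_of_false (fun h => huv ?_) fun h => huv (hs _ _ h)
    have := hs _ _ h
    rw [hσ, hσ] at this
    tauto

theorem Iso.snd_mem_iff_snd_mem_iff {G : SimpleGraph α} {H : SimpleGraph β} {U : Set β}
    (hG : G.Preconnected) (hH : ∀ a b, H.Reachable a b ↔ (a ∈ U ↔ b ∈ U))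
    (e : (G □ H) ≃g (G □ H)) (x y : α × β) :
    ((e x).2 ∈ U ↔ (e y).2 ∈ U) ↔ (x.2 ∈ U ↔ y.2 ∈ U) := by
  have hreach : ∀ x y : α × β, (G □ H).Reachable x y ↔ (x.2 ∈ U ↔ y.2 ∈ U) := fun x y => by
    rw [reachable_boxProd, hH, and_iff_right (hG _ _)]
  rw [← hreach, ← hreach]
  exact e.reachable_iff

theorem exists_involutive_iso_swap_of_boxProd [Finite α] {G : SimpleGraph α}
    {H : SimpleGraph β} {U : Set β} (hG : G.Connected)
    (hH : ∀ a b, H.Reachable a b ↔ (a ∈ U ↔ b ∈ U)) (hU : U.Nonempty)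
    (e : (G □ H) ≃g (G □ H)) (he : ∀ x, (e x).2 ∈ U ↔ x.2 ∉ U) :
    ∃ σ : H ≃g H, Function.Involutive σ ∧ ∀ v, σ v ∈ U ↔ v ∉ U := by
  have hbij : Set.BijOn e {x | x.2 ∈ U} {x | x.2 ∈ Uᶜ} :=
    Equiv.bijOn' e.toEquiv (fun x hx h => (he x).mp h hx) fun y hy => by
      by_contra h
      exact hy (by simpa using (he (e.symm y)).mpr h)
  obtain ⟨f⟩ := boxProd_left_cancel hG
    ((connected_iff _).mpr ⟨induce_preconnected_of_reachable_iff hH, hU.to_subtype⟩)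
    ((boxProdInduceSndIso U).symm.trans ((e.induce hbij).trans (boxProdInduceSndIso Uᶜ)))
  exact exists_involutive_iso_swap (fun a b h => (hH a b).mp h.reachable) f

theorem boxAdj_eq_boxProd_adj (G : SimpleGraph α) (H : SimpleGraph β) :
    boxAdj G.Adj H.Adj = (G □ H).Adj := by
  ext x y
  simp only [boxAdj, boxProd_adj]
  tauto

end Components

end SimpleGraph

open SimpleGraph in
theorem stmt_19_general {VG VS : Type*} [Fintype VG] [Fintype VS]
    (AdjG : VG → VG → Prop) (hsG : Symmetric AdjG)
    (hconnG : ∀ u v : VG, Relation.ReflTransGen AdjG u v)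
    (hnbG : ¬∃ c : VG → Bool, ∀ u v, AdjG u v → c u ≠ c v)
    (AdjS : VS → VS → Prop) (hsS : Symmetric AdjS)
    (hconnS : ∀ u v : VS, Relation.ReflTransGen AdjS u v)
    (U W : Set VS) (hdisj : Disjoint U W) (hcover : U ∪ W = Set.univ)
    (hbip : ∀ u v, AdjS u v → (u ∈ U ∧ v ∈ W) ∨ (u ∈ W ∧ v ∈ U)) :
    ∀ τ ∈ autSubgroup (boxAdj (sAdj AdjG) (sAdj AdjS)),
      ((∀ x : VG × VS, x.2 ∈ U → (τ x).2 ∈ U) ∨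
       (∀ x : VG × VS, x.2 ∈ U → (τ x).2 ∈ W)) ∧
      ∃ σ : Equiv.Perm VS, σ ∈ autSubgroup (sAdj AdjS) ∧ σ * σ = 1 ∧
        (∀ x : VG × VS, x.2 ∈ U → (τ (x.1, σ x.2)).2 ∈ U) ∧
        (∀ x : VG × VS, x.2 ∈ U → σ (τ x).2 ∈ U) ∧
        (σ ≠ 1 → ⇑σ '' U = W ∧ ⇑σ '' W = U) := by
  intro τ hτ
  obtain rfl : W = Uᶜ := (IsCompl.compl_eq ⟨hdisj, codisjoint_iff.mpr hcover⟩).symm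
  set G := cartesianSkeleton AdjG
  set H := cartesianSkeleton AdjS
  have hG : G.Preconnected := cartesianSkeleton_preconnected hsG hconnG hnbG
  have hH : ∀ a b, H.Reachable a b ↔ (a ∈ U ↔ b ∈ U) :=
    cartesianSkeleton_reachable_iff hsS hconnS fun u v huv => by
      rcases hbip u v huv with ⟨hu, hv⟩ | ⟨hu, hv⟩ <;> simp_all
  rw [show boxAdj (sAdj AdjG) (sAdj AdjS) = (G □ H).Adj from boxAdj_eq_boxProd_adj G H] at hτ
  let e : (G □ H) ≃g (G □ H) := ⟨τ, fun {x y} => (hτ x y).symm⟩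
  by_cases hstab : ∀ x : VG × VS, x.2 ∈ U → (τ x).2 ∈ U
  · exact ⟨.inl hstab, 1, one_mem _, mul_one 1, hstab, hstab, fun h => (h rfl).elim⟩
  push Not at hstab
  obtain ⟨x₀, hx₀, hτx₀⟩ := hstab
  have hswap : ∀ x : VG × VS, (τ x).2 ∈ U ↔ x.2 ∉ U := fun x => by
    have := e.snd_mem_iff_snd_mem_iff hG hH x x₀
    tauto
  obtain ⟨σ, hσσ, hσ⟩ := exists_involutive_iso_swap_of_boxProd
    ((connected_iff _).mpr ⟨hG, ⟨x₀.1⟩⟩) hH ⟨_, hx₀⟩ e hswap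
  refine ⟨.inr fun x hx h => (hswap x).mp h hx, σ.toEquiv, fun x y => σ.map_adj_iff.symm,
    Equiv.ext hσσ, fun x hx => (hswap _).mpr fun h => (hσ _).mp h hx,
    fun x hx => (hσ _).mpr fun h => (hswap x).mp h hx, fun _ => ⟨?_, ?_⟩⟩
  · exact (congrFun hσσ.image_eq_preimage_symm U).trans (Set.ext hσ)
  · exact (congrFun hσσ.image_eq_preimage_symm Uᶜ).trans
      (Set.ext fun v => (hσ v).not.trans not_not)

/-- Let `Γ` be connected, non-bipartite, twin-free, and `Σ` connected,
twin-free, bipartite with bipartition `{U, W}`. Then every automorphism `τ` of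
`S(Γ) □ S(Σ)` either stabilizes `V(Γ) × U` setwise or maps it onto `V(Γ) × W`;
and there exists `σ ∈ Aut(S(Σ))` with `σ² = id` such that composing with `(id, σ)`
yields an automorphism stabilizing `V(Γ) × U`, and `σ` interchanges `U` and `W`
whenever `σ ≠ id`. -/
theorem stmt_19 {VG VS : Type*} [Fintype VG] [Fintype VS]
    (AdjG : VG → VG → Prop) (hsG : Symmetric AdjG)
    (hconnG : ∀ u v : VG, Relation.ReflTransGen AdjG u v)
    (hnbG : ¬∃ c : VG → Bool, ∀ u v, AdjG u v → c u ≠ c v)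
    (htfG : ∀ u v : VG, (∀ x, AdjG u x ↔ AdjG v x) → u = v)
    (AdjS : VS → VS → Prop) (hsS : Symmetric AdjS)
    (hconnS : ∀ u v : VS, Relation.ReflTransGen AdjS u v)
    (htfS : ∀ u v : VS, (∀ x, AdjS u x ↔ AdjS v x) → u = v)
    (U W : Set VS) (hdisj : Disjoint U W) (hcover : U ∪ W = Set.univ)
    (hU : U.Nonempty) (hW : W.Nonempty)
    (hbip : ∀ u v, AdjS u v → (u ∈ U ∧ v ∈ W) ∨ (u ∈ W ∧ v ∈ U)) :
    ∀ τ ∈ autSubgroup (boxAdj (sAdj AdjG) (sAdj AdjS)),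
      ((∀ x : VG × VS, x.2 ∈ U → (τ x).2 ∈ U) ∨
       (∀ x : VG × VS, x.2 ∈ U → (τ x).2 ∈ W)) ∧
      ∃ σ : Equiv.Perm VS, σ ∈ autSubgroup (sAdj AdjS) ∧ σ * σ = 1 ∧
        (∀ x : VG × VS, x.2 ∈ U → (τ (x.1, σ x.2)).2 ∈ U) ∧
        (∀ x : VG × VS, x.2 ∈ U → σ (τ x).2 ∈ U) ∧
        (σ ≠ 1 → ⇑σ '' U = W ∧ ⇑σ '' W = U) :=
  stmt_19_general AdjG hsG hconnG hnbG AdjS hsS hconnS U W hdisj hcover hbip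
end
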